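/- arXiv:math/0702267 — 5 statements merged into one kernel-verified Lean document; each statement's English description precedes it below -/
import Mathlib

section
/- For every isotropic system L, the number of pairs (A, B) such that (G, A, B) is a graphic presentation of L does not depend on the choice of the fundamental graph G of L: if G and H are both fundamental graphs of L, then the number of pairs (A,B) with (G,A,B) a graphic presentation of L equals the number of pairs (A,B) with (H,A,B) a graphic presentation of L. This common number is denoted λ(L), the index of L. -/
open Matrix

section Defs

variable {F : Type} [Field F] {V : Type} [Fintype V] [DecidableEq V]

/-- The bilinear form on `K = F × F`: `⟨(x,y),(x',y')⟩ = x·y' − x'·y`. -/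
def formK (a b : F × F) : F := a.1 * b.2 - b.1 * a.2

/-- The bilinear form on `K^V`: `⟨A,A'⟩ = Σ_v ⟨A v, A' v⟩`. -/
def formKV (A B : V → F × F) : F := ∑ v, formK (A v) (B v)

/-- An isotropic system: an `n`-dimensional subspace of `K^V` on which the form vanishes. -/
def IsIsotropic (L : Submodule F (V → F × F)) : Prop :=
  Module.finrank F L = Fintype.card V ∧ ∀ A ∈ L, ∀ B ∈ L, formKV A B = 0

/-- A labeled graph on `V` over `F`: a symmetric matrix with zero diagonal. -/
def IsLGraph (G : Matrix V V F) : Prop := G.IsSymm ∧ ∀ v, G v v = 0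

/-- The `2n × 2n` matrix `D(A,B)` with four diagonal blocks
`[[diag Z, diag T],[diag X, diag Y]]` where `A = (X,Y)`, `B = (Z,T)`. -/
def Dmat (A B : V → F × F) : Matrix (V ⊕ V) (V ⊕ V) F :=
  fromBlocks (diagonal fun v => (B v).1) (diagonal fun v => (B v).2)
    (diagonal fun v => (A v).1) (diagonal fun v => (A v).2)

/-- The diagonal entries of `det D(A,B) = (diag Z)(diag Y) − (diag X)(diag T)`. -/
def detD (A B : V → F × F) (v : V) : F := (B v).1 * (A v).2 - (A v).1 * (B v).2

/-- The `v`-th row of the `n × 2n` matrix `(I | G) · D(A,B)` viewed as a vector in `K^V`. -/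
def presRow (G : Matrix V V F) (A B : V → F × F) (v : V) : V → F × F :=
  fun w => ((fromCols (1 : Matrix V V F) G * Dmat A B) v (Sum.inl w),
            (fromCols (1 : Matrix V V F) G * Dmat A B) v (Sum.inr w))

/-- `(G, A, B)` is a graphic presentation of the isotropic system `L`:
`G` is a labeled graph, `det D(A,B) = c·I` with `c ≠ 0`, and the rows of
`(I | G)·D(A,B)` form a basis of `L`. -/
def IsGraphicPresentation (L : Submodule F (V → F × F)) (G : Matrix V V F)
    (A B : V → F × F) : Prop :=
  IsLGraph G ∧ (∃ c : F, c ≠ 0 ∧ ∀ v, detD A B v = c) ∧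
  LinearIndependent F (presRow G A B) ∧
  Submodule.span F (Set.range (presRow G A B)) = L

/-- `G` is a fundamental graph of `L`. -/
def IsFundamental (L : Submodule F (V → F × F)) (G : Matrix V V F) : Prop :=
  ∃ A B, IsGraphicPresentation L G A B

/-- The local complementation operation `G *_r v`. -/
def starOp (G : Matrix V V F) (r : F) (v : V) : Matrix V V F :=
  Matrix.of fun u w => if u = v ∨ w = v ∨ u = w then G u w else G u w + r * G v u * G v w

/-- The operation `G ∘_s v`, multiplying the edges at `v` by `s`. -/
def circOp (G : Matrix V V F) (s : F) (v : V) : Matrix V V F :=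
  Matrix.of fun u w => if u = v ∨ w = v then s * G u w else G u w

/-- One local operation. -/
def LocalStep (G H : Matrix V V F) : Prop :=
  (∃ v r, H = starOp G r v) ∨ (∃ v s, s ≠ (0 : F) ∧ H = circOp G s v)

/-- Two labeled graphs are locally equivalent if one is obtained from the other by a
finite sequence of operations `*_r v` and `∘_s v`. -/
def LocallyEquivalent (G H : Matrix V V F) : Prop :=
  Relation.ReflTransGen LocalStep G H

/-- A complete vector: all coordinates nonzero. -/
def CompleteVec (A : V → F × F) : Prop := ∀ v, A v ≠ 0

/-- `E_{v,x}`: the vector equal to `x` at `v` and `0` elsewhere. -/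
def Ev (v : V) (x : F × F) : V → F × F := fun w => if w = v then x else 0

/-- `Â`: the span of the vectors `A_v = E_{v, A v}`. -/
def hatSub (A : V → F × F) : Submodule F (V → F × F) :=
  Submodule.span F (Set.range fun v => Ev v (A v))

/-- An Eulerian vector of `L`: a complete vector with `Â ∩ L = 0`. -/
def IsEulerian (L : Submodule F (V → F × F)) (A : V → F × F) : Prop :=
  CompleteVec A ∧ hatSub A ⊓ L = ⊥

/-- `ε(L)`: the number of Eulerian vectors of `L`. -/
noncomputable def eulerCount (L : Submodule F (V → F × F)) : ℕ :=
  Set.ncard {A | IsEulerian L A}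

/-- The number of pairs `(A,B)` such that `(G,A,B)` is a graphic presentation of `L`. -/
noncomputable def lamCount (L : Submodule F (V → F × F)) (G : Matrix V V F) : ℕ :=
  Set.ncard {p : (V → F × F) × (V → F × F) | IsGraphicPresentation L G p.1 p.2}

/-- The number of graphic presentations (triples `(G,A,B)`) of `L`. -/
noncomputable def presCount (L : Submodule F (V → F × F)) : ℕ :=
  Set.ncard {t : Matrix V V F × (V → F × F) × (V → F × F) |
    IsGraphicPresentation L t.1 t.2.1 t.2.2}

/-- `l(G)`: the number of labeled graphs locally equivalent to `G`. -/
noncomputable def locCount (G : Matrix V V F) : ℕ :=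
  Set.ncard {H | LocallyEquivalent G H}

/-- Connectivity of a labeled graph: the simple graph with edges `{v,w}` with
`g_{vw} ≠ 0` is connected. -/
def GraphConnected (G : Matrix V V F) : Prop :=
  (SimpleGraph.fromRel fun v w => G v w ≠ 0).Connected

end Defs

variable {F : Type} [Field F] [Fintype F] {V : Type} [Fintype V] [DecidableEq V] [Nonempty V]


set_option linter.unusedSectionVars false
set_option maxHeartbeats 1000000

section AuxA
variable {F : Type} [Field F] {V : Type} [Fintype V] [DecidableEq V]

theorem pair_nonzero {A B : V → F × F} {v : V} (hc : detD A B v ≠ 0) :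
    A v ≠ 0 ∧ B v ≠ 0 := by
  constructor <;> intro h <;> apply hc <;> simp [detD, h]

theorem pair_indep {A B : V → F × F} {v : V} (hc : detD A B v ≠ 0) {x y : F}
    (h : x • A v + y • B v = 0) : x = 0 ∧ y = 0 := by
  have h1 : x * (A v).1 + y * (B v).1 = 0 := by
    have := congrArg Prod.fst h; simpa using this
  have h2 : x * (A v).2 + y * (B v).2 = 0 := by
    have := congrArg Prod.snd h; simpa using this
  have hy : y * detD A B v = 0 := by
    unfold detD; linear_combination (A v).2 * h1 - (A v).1 * h2
  have hx : x * detD A B v = 0 := by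
    unfold detD; linear_combination (B v).1 * h2 - (B v).2 * h1
  exact ⟨(mul_eq_zero.1 hx).resolve_right hc, (mul_eq_zero.1 hy).resolve_right hc⟩

theorem pair_expand {A B : V → F × F} {v : V} (hc : detD A B v ≠ 0) (z : F × F) :
    ∃ p r : F, z = p • A v + r • B v := by
  refine ⟨((B v).1 * z.2 - z.1 * (B v).2) / detD A B v,
    (z.1 * (A v).2 - (A v).1 * z.2) / detD A B v, ?_⟩
  simp only [detD] at hc ⊢
  apply Prod.ext <;>
  · simp only [Prod.fst_add, Prod.snd_add, Prod.smul_fst, Prod.smul_snd, smul_eq_mul]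
    rw [div_mul_eq_mul_div, div_mul_eq_mul_div, ← add_div, eq_div_iff hc]
    ring

theorem fam_smul_indep {M : Type} [AddCommGroup M] [Module F M] {t : V → F}
    (ht : ∀ v, t v ≠ 0) {f : V → M} (hf : LinearIndependent F f) :
    LinearIndependent F fun v => t v • f v := by
  rw [Fintype.linearIndependent_iff] at hf ⊢
  intro g hg v
  have := hf (fun v => g v * t v) (by simpa [smul_smul] using hg) v
  exact (mul_eq_zero.1 this).resolve_right (ht v)

theorem fam_smul_span {M : Type} [AddCommGroup M] [Module F M] {t : V → F}
    (ht : ∀ v, t v ≠ 0) (f : V → M) :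
    Submodule.span F (Set.range fun v => t v • f v) = Submodule.span F (Set.range f) := by
  apply le_antisymm
  · rw [Submodule.span_le]; rintro _ ⟨v, rfl⟩
    exact Submodule.smul_mem _ _ (Submodule.subset_span (Set.mem_range_self v))
  · rw [Submodule.span_le]; rintro _ ⟨v, rfl⟩
    rw [← inv_smul_smul₀ (ht v) (f v)]
    exact Submodule.smul_mem _ _
      (Submodule.subset_span (Set.mem_range_self (f := fun v => t v • f v) v))

theorem fam_addcol_indep {M : Type} [AddCommGroup M] [Module F M] (v₀ : V) {p : F}
    (hp : p ≠ 0) (c : V → F) {f : V → M} (hf : LinearIndependent F f) :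
    LinearIndependent F fun u => if u = v₀ then p⁻¹ • f v₀ else f u + c u • f v₀ := by
  rw [Fintype.linearIndependent_iff] at hf ⊢
  intro s hs
  set e : V → F := fun u => if u = v₀ then p⁻¹ else c u with he
  set T : V → F := fun u => if u = v₀ then (∑ w, s w * e w) else s u with hT
  have key : ∀ u, s u • (if u = v₀ then p⁻¹ • f v₀ else f u + c u • f v₀)
      = (if u = v₀ then 0 else s u) • f u + (s u * e u) • f v₀ := by
    intro u
    rcases eq_or_ne u v₀ with h|h
    · subst h; simp [he, smul_smul]
    · simp [he, h, smul_add, smul_smul]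
  rw [Finset.sum_congr rfl (fun u _ => key u), Finset.sum_add_distrib,
    ← Finset.sum_smul] at hs
  have hs2 : ∑ u, T u • f u = 0 := by
    have expand : ∀ u, T u • f u
        = (if u = v₀ then 0 else s u) • f u + (if u = v₀ then (∑ w, s w * e w) • f u else 0) := by
      intro u
      rcases eq_or_ne u v₀ with h|h
      · subst u; simp [hT]
      · simp [hT, h]
    rw [Finset.sum_congr rfl (fun u _ => expand u), Finset.sum_add_distrib,
      Finset.sum_ite_eq' Finset.univ v₀ (fun u => (∑ w, s w * e w) • f u)]
    simpa using hs
  have hall := hf T hs2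
  have hne : ∀ u, u ≠ v₀ → s u = 0 := by
    intro u hu; have := hall u; simpa [hT, hu] using this
  have hv : s v₀ = 0 := by
    have h0 := hall v₀
    simp only [hT, if_pos rfl] at h0
    rw [Finset.sum_eq_single v₀ (fun w _ hw => by simp [hne w hw]) (by simp)] at h0
    simp only [he, if_pos rfl] at h0
    exact (mul_eq_zero.1 h0).resolve_right (inv_ne_zero hp)
  intro u; rcases eq_or_ne u v₀ with h|h
  · exact h ▸ hv
  · exact hne u h

theorem fam_addcol_span {M : Type} [AddCommGroup M] [Module F M] (v₀ : V) {p : F}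
    (hp : p ≠ 0) (c : V → F) (f : V → M) :
    Submodule.span F (Set.range fun u => if u = v₀ then p⁻¹ • f v₀ else f u + c u • f v₀)
      = Submodule.span F (Set.range f) := by
  apply le_antisymm
  · rw [Submodule.span_le]; rintro _ ⟨v, rfl⟩
    rcases eq_or_ne v v₀ with h|h
    · simp only [if_pos h]
      exact Submodule.smul_mem _ _ (Submodule.subset_span (Set.mem_range_self _))
    · simp only [if_neg h]
      exact Submodule.add_mem _ (Submodule.subset_span (Set.mem_range_self _))
        (Submodule.smul_mem _ _ (Submodule.subset_span (Set.mem_range_self _)))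
  · rw [Submodule.span_le]; rintro _ ⟨v, rfl⟩
    set g : V → M := fun u => if u = v₀ then p⁻¹ • f v₀ else f u + c u • f v₀ with hg
    have hv₀ : f v₀ ∈ Submodule.span F (Set.range g) := by
      have h1 : f v₀ = p • g v₀ := by
        simp [hg, smul_smul, mul_inv_cancel₀ hp]
      rw [h1]
      exact Submodule.smul_mem _ _ (Submodule.subset_span (Set.mem_range_self _))
    rcases eq_or_ne v v₀ with h|h
    · exact h ▸ hv₀
    · have h2 : f v = g v - c v • f v₀ := by simp [hg, h]
      rw [h2]
      exact Submodule.sub_mem _ (Submodule.subset_span (Set.mem_range_self _))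
        (Submodule.smul_mem _ _ hv₀)

theorem ncard_eq_of_maps {α β : Type} (S : Set α) (T : Set β) (f : α → β) (g : β → α)
    (hf : ∀ a ∈ S, f a ∈ T) (hg : ∀ b ∈ T, g b ∈ S)
    (hgf : ∀ a ∈ S, g (f a) = a) (hfg : ∀ b ∈ T, f (g b) = b) : S.ncard = T.ncard := by
  have himg : f '' S = T := Set.Subset.antisymm
    (by rintro _ ⟨a, ha, rfl⟩; exact hf a ha)
    (fun b hb => ⟨g b, hg b hb, hfg b hb⟩)
  rw [← himg]
  exact (Set.ncard_image_of_injOn (fun a ha a' ha' h => by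
    rw [← hgf a ha, h, hgf a' ha'])).symm

/-- abstract version of the rows of `(I|G)·D(A,B)` -/
def rowFun (Γ : Matrix V V F) (A B : V → F × F) (v : V) : V → F × F :=
  fun w => (if v = w then B w else 0) + Γ v w • A w

theorem presRow_eq (Γ : Matrix V V F) (A B : V → F × F) :
    presRow Γ A B = rowFun Γ A B := by
  funext v w
  simp only [presRow, rowFun, Matrix.mul_apply, Fintype.sum_sum_type,
    fromCols_apply_inl, fromCols_apply_inr, Dmat, fromBlocks_apply₁₁,
    fromBlocks_apply₁₂, fromBlocks_apply₂₁, fromBlocks_apply₂₂,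
    Matrix.one_apply, Matrix.diagonal_apply, Prod.smul_def, Prod.mk_add_mk,
    smul_eq_mul, mul_ite, mul_zero, ite_and, Finset.sum_ite_eq,
    Finset.mem_univ, if_true, Prod.ext_iff]
  constructor <;> rcases eq_or_ne v w with h|h <;> simp [h]

theorem presAB_ne {L : Submodule F (V → F × F)} {Γ : Matrix V V F} {A B : V → F × F}
    (h : IsGraphicPresentation L Γ A B) (v : V) : detD A B v ≠ 0 := by
  obtain ⟨c, hc0, hc⟩ := h.2.1
  rw [hc v]; exact hc0

theorem pres_coords {L : Submodule F (V → F × F)} {Γ : Matrix V V F} {A B : V → F × F}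
    (h : IsGraphicPresentation L Γ A B) {x : V → F × F} (hx : x ∈ L) :
    ∃ s : V → F, (∑ u, s u • rowFun Γ A B u = x)
      ∧ ∀ w, x w = s w • B w + (∑ u, s u * Γ u w) • A w := by
  obtain ⟨hG, hc, hind, hspan⟩ := h
  rw [presRow_eq] at hspan
  rw [← hspan, Submodule.mem_span_range_iff_exists_fun F] at hx
  obtain ⟨s, hs⟩ := hx
  refine ⟨s, hs, fun w => ?_⟩
  rw [← hs]
  have h1 : (∑ u, s u • rowFun Γ A B u) w = ∑ u, s u • rowFun Γ A B u w := by
    simp [Finset.sum_apply]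
  have h2 : ∀ u, s u • rowFun Γ A B u w
      = (if u = w then s u • B w else 0) + (s u * Γ u w) • A w := by
    intro u; rcases eq_or_ne u w with h|h
    · subst h; simp [rowFun, smul_add, smul_smul]
    · simp [rowFun, h, smul_add, smul_smul]
  rw [h1, Finset.sum_congr rfl (fun u _ => h2 u), Finset.sum_add_distrib,
    Finset.sum_ite_eq' Finset.univ w (fun u => s u • B w), ← Finset.sum_smul]
  simp

theorem pres_hat {L : Submodule F (V → F × F)} {Γ₁ : Matrix V V F} {A₁ B₁ : V → F × F}
    (h : IsGraphicPresentation L Γ₁ A₁ B₁) {x : V → F × F} (hx : x ∈ L)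
    (hm : ∀ w, ∃ t : F, x w = t • A₁ w) : x = 0 := by
  obtain ⟨s, hs, hco⟩ := pres_coords h hx
  have hz : ∀ w, s w = 0 := by
    intro w
    obtain ⟨t, ht⟩ := hm w
    have e := hco w
    rw [ht] at e
    have e2 : ((∑ u, s u * Γ₁ u w) - t) • A₁ w + s w • B₁ w = 0 := by
      rw [sub_smul]
      calc (∑ u, s u * Γ₁ u w) • A₁ w - t • A₁ w + s w • B₁ w
          = (s w • B₁ w + (∑ u, s u * Γ₁ u w) • A₁ w) - t • A₁ w := by abel
        _ = 0 := by rw [← e]; abel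
    exact (pair_indep (presAB_ne h w) e2).2
  rw [← hs]
  exact Finset.sum_eq_zero (fun u _ => by rw [hz u, zero_smul])

end AuxA
section AuxB
variable {F : Type} [Field F] {V : Type} [Fintype V] [DecidableEq V]

theorem pres_smul {L : Submodule F (V → F × F)} {Γ : Matrix V V F} {A B : V → F × F}
    (h : IsGraphicPresentation L Γ A B) {d : F} (hd : d ≠ 0) :
    IsGraphicPresentation L (d • Γ) A (fun v => d • B v) := by
  obtain ⟨⟨hsym, hdiag⟩, ⟨c, hc0, hc⟩, hind, hspan⟩ := h
  rw [presRow_eq] at hind hspan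
  have hrow : rowFun (d • Γ) A (fun v => d • B v) = fun v => d • rowFun Γ A B v := by
    funext v w
    rcases eq_or_ne v w with hvw|hvw <;>
      simp [rowFun, hvw, smul_add, smul_smul, Matrix.smul_apply, smul_eq_mul]
  refine ⟨⟨?_, ?_⟩, ⟨d * c, mul_ne_zero hd hc0, fun v => ?_⟩, ?_, ?_⟩
  · unfold Matrix.IsSymm at hsym ⊢
    rw [Matrix.transpose_smul, hsym]
  · intro v; simp [Matrix.smul_apply, hdiag v]
  · have := hc v
    unfold detD at this ⊢
    simp only [Prod.smul_fst, Prod.smul_snd, smul_eq_mul]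
    linear_combination d * this
  · rw [presRow_eq, hrow]
    exact fam_smul_indep (fun _ => hd) hind
  · rw [presRow_eq, hrow, fam_smul_span (fun _ => hd)]
    exact hspan

theorem lam_smul {d : F} (hd : d ≠ 0) (L : Submodule F (V → F × F)) (Γ : Matrix V V F) :
    lamCount L (d • Γ) = lamCount L Γ := by
  apply ncard_eq_of_maps _ _
    (fun P : (V → F × F) × (V → F × F) => (P.1, fun v => d⁻¹ • P.2 v))
    (fun P : (V → F × F) × (V → F × F) => (P.1, fun v => d • P.2 v))
  · rintro ⟨A, B⟩ hAB
    have := pres_smul hAB (inv_ne_zero hd)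
    rwa [smul_smul, inv_mul_cancel₀ hd, one_smul] at this
  · rintro ⟨A, B⟩ hAB
    exact pres_smul hAB hd
  · rintro ⟨A, B⟩ _
    simp [smul_smul, mul_inv_cancel₀ hd]
  · rintro ⟨A, B⟩ _
    simp [smul_smul, inv_mul_cancel₀ hd]

/-- rescaled graph -/
def rescG (t : V → F) (Γ : Matrix V V F) : Matrix V V F :=
  Matrix.of fun v w => (t v)⁻¹ * ((t w)⁻¹ * Γ v w)

theorem pres_rescale {L : Submodule F (V → F × F)} {Γ : Matrix V V F} {A B : V → F × F}
    (h : IsGraphicPresentation L Γ A B) (t : V → F) (ht : ∀ v, t v ≠ 0) :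
    IsGraphicPresentation L (rescG t Γ) (fun v => t v • A v) (fun v => (t v)⁻¹ • B v) := by
  obtain ⟨⟨hsym, hdiag⟩, ⟨c, hc0, hc⟩, hind, hspan⟩ := h
  rw [presRow_eq] at hind hspan
  have hcoef : ∀ v w : V, (t v)⁻¹ * ((t w)⁻¹ * Γ v w) * t w = (t v)⁻¹ * Γ v w := by
    intro v w; field_simp [ht v, ht w]
  have hrow : rowFun (rescG t Γ) (fun v => t v • A v) (fun v => (t v)⁻¹ • B v)
      = fun v => (t v)⁻¹ • rowFun Γ A B v := by
    funext v w
    rcases eq_or_ne v w with hvw|hvw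
    · subst hvw
      simp only [rowFun, rescG, Matrix.of_apply, if_pos rfl, if_true, Pi.smul_apply,
        smul_add, smul_smul, hcoef]
    · simp only [rowFun, rescG, Matrix.of_apply, if_neg hvw, if_false, Pi.smul_apply,
        smul_add, smul_smul, hcoef, smul_zero, zero_add]
  refine ⟨⟨Matrix.IsSymm.ext fun i j => ?_, fun v => ?_⟩,
    ⟨c, hc0, fun v => ?_⟩, ?_, ?_⟩
  · simp only [rescG, Matrix.of_apply]
    rw [hsym.apply i j]; ring
  · simp [rescG, hdiag v]
  · have := hc v
    unfold detD at this ⊢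
    simp only [Prod.smul_fst, Prod.smul_snd, smul_eq_mul]
    field_simp [ht v]
    linear_combination this
  · rw [presRow_eq, hrow]
    exact fam_smul_indep (fun v => inv_ne_zero (ht v)) hind
  · rw [presRow_eq, hrow, fam_smul_span (fun v => inv_ne_zero (ht v))]
    exact hspan

theorem rescG_inv (t : V → F) (ht : ∀ v, t v ≠ 0) (Γ : Matrix V V F) :
    rescG (fun v => (t v)⁻¹) (rescG t Γ) = Γ := by
  ext v w
  simp only [rescG, Matrix.of_apply, inv_inv]
  field_simp [ht v, ht w]

theorem lam_resc (t : V → F) (ht : ∀ v, t v ≠ 0) (L : Submodule F (V → F × F))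
    (Γ : Matrix V V F) : lamCount L Γ = lamCount L (rescG t Γ) := by
  apply ncard_eq_of_maps _ _
    (fun P : (V → F × F) × (V → F × F) => (fun v => t v • P.1 v, fun v => (t v)⁻¹ • P.2 v))
    (fun P : (V → F × F) × (V → F × F) => (fun v => (t v)⁻¹ • P.1 v, fun v => t v • P.2 v))
  · rintro ⟨A, B⟩ hAB
    exact pres_rescale hAB t ht
  · rintro ⟨A, B⟩ hAB
    have := pres_rescale hAB (fun v => (t v)⁻¹) (fun v => inv_ne_zero (ht v))
    rw [rescG_inv t ht] at this
    simp only [inv_inv] at this; exact this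
  · rintro ⟨A, B⟩ _
    refine Prod.ext ?_ ?_ <;> funext v <;> simp only [smul_smul]
    · rw [inv_mul_cancel₀ (ht v), one_smul]
    · rw [mul_inv_cancel₀ (ht v), one_smul]
  · rintro ⟨A, B⟩ _
    refine Prod.ext ?_ ?_ <;> funext v <;> simp only [smul_smul]
    · rw [mul_inv_cancel₀ (ht v), one_smul]
    · rw [inv_mul_cancel₀ (ht v), one_smul]

def swG (Γ : Matrix V V F) (v₀ : V) (p r : F) : Matrix V V F :=
  Matrix.of fun u w =>
    if u = v₀ ∨ w = v₀ then p⁻¹ * Γ u w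
    else if u = w then 0 else Γ u w + r / p * Γ v₀ u * Γ v₀ w
def swA (A B : V → F × F) (v₀ : V) (p r : F) : V → F × F :=
  fun u => if u = v₀ then p • A v₀ + r • B v₀ else A u
def swB (Γ : Matrix V V F) (A B : V → F × F) (v₀ : V) (p r : F) : V → F × F :=
  fun u => if u = v₀ then p⁻¹ • B v₀ else B u + (r / p * Γ v₀ u ^ 2) • A u

theorem sw_row {Γ : Matrix V V F} (hsym : Γ.IsSymm) (hdiag : ∀ v, Γ v v = 0)
    (A B : V → F × F) (v₀ : V) {p : F} (hp : p ≠ 0) (r : F) :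
    rowFun (swG Γ v₀ p r) (swA A B v₀ p r) (swB Γ A B v₀ p r)
      = fun u => if u = v₀ then p⁻¹ • rowFun Γ A B v₀
        else rowFun Γ A B u + (r / p * Γ v₀ u) • rowFun Γ A B v₀ := by
  funext u w
  by_cases hu : u = v₀ <;> by_cases hw : w = v₀
  · subst hu; subst hw
    simp [rowFun, swG, swA, swB, hdiag, smul_add]
  · subst hu
    have hw' : ¬ u = w := fun hh => hw (hh ▸ rfl)
    simp [rowFun, swG, swA, swB, hw, hw', smul_add, smul_smul]
  · subst hw
    have h1 : Γ u w = Γ w u := hsym.apply w u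
    simp only [rowFun, swG, swA, swB, Matrix.of_apply, Pi.add_apply, Pi.smul_apply,
      or_true, if_neg hu, if_pos rfl, ↓reduceIte, hdiag w, smul_add, smul_smul, zero_smul,
      add_zero, zero_add, h1]
    apply Prod.ext <;>
    · simp only [Prod.fst_add, Prod.snd_add, Prod.smul_fst, Prod.smul_snd, smul_eq_mul]
      field_simp
  · by_cases huw : u = w
    · subst huw
      simp only [rowFun, swG, swA, swB, Matrix.of_apply, Pi.add_apply, Pi.smul_apply,
        if_neg hu, if_neg hw, or_self, if_pos rfl, hdiag u, zero_smul, add_zero,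
        if_neg (fun hh : v₀ = u => hu hh.symm), if_true, eq_self_iff_true,
        smul_add, smul_smul, zero_add]
      apply Prod.ext <;>
      · simp only [Prod.fst_add, Prod.snd_add, Prod.smul_fst, Prod.smul_snd, smul_eq_mul,
          Prod.fst_zero, Prod.snd_zero, if_true]
        ring
    · have hw2 : ¬ v₀ = w := fun hh => hw hh.symm
      have hor : ¬ (u = v₀ ∨ w = v₀) := by simp [hu, hw]
      simp only [rowFun, swG, swA, swB, Matrix.of_apply, Pi.add_apply, Pi.smul_apply,
        if_neg hu, if_neg hw, if_neg huw, if_neg hw2, if_neg hor, smul_add, smul_smul,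
        add_smul, zero_add, if_false]

theorem swG_case1 (Γ : Matrix V V F) (v₀ : V) (p r : F) {u w : V}
    (h : u = v₀ ∨ w = v₀) : swG Γ v₀ p r u w = p⁻¹ * Γ u w := by
  simp [swG, h]

theorem swG_case2 (Γ : Matrix V V F) (v₀ : V) (p r : F) {u : V} (hu : ¬ u = v₀) :
    swG Γ v₀ p r u u = 0 := by
  simp [swG, hu]

theorem swG_case3 (Γ : Matrix V V F) (v₀ : V) (p r : F) {u w : V}
    (hu : ¬ u = v₀) (hw : ¬ w = v₀) (huw : ¬ u = w) :
    swG Γ v₀ p r u w = Γ u w + r / p * Γ v₀ u * Γ v₀ w := by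
  simp [swG, hu, hw, huw]

theorem swG_lgraph {Γ : Matrix V V F} (hΓ : IsLGraph Γ) (v₀ : V) (p r : F) :
    IsLGraph (swG Γ v₀ p r) := by
  obtain ⟨hsym, hdiag⟩ := hΓ
  constructor
  · apply Matrix.IsSymm.ext
    intro i j
    by_cases hor : i = v₀ ∨ j = v₀
    · rw [swG_case1 _ _ _ _ (Or.symm hor), swG_case1 _ _ _ _ hor, hsym.apply i j]
    · push_neg at hor
      obtain ⟨hi, hj⟩ := hor
      by_cases hij : i = j
      · subst hij; rfl
      · have hji : ¬ j = i := fun hh => hij hh.symm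
        rw [swG_case3 _ _ _ _ hj hi hji, swG_case3 _ _ _ _ hi hj hij, hsym.apply i j]
        ring
  · intro v
    by_cases hv : v = v₀
    · rw [swG_case1 _ _ _ _ (Or.inl hv), hv, hdiag v₀, mul_zero]
    · exact swG_case2 _ _ _ _ hv

theorem pres_switch {L : Submodule F (V → F × F)} {Γ : Matrix V V F} {A B : V → F × F}
    (h : IsGraphicPresentation L Γ A B) (v₀ : V) {p : F} (hp : p ≠ 0) (r : F) :
    IsGraphicPresentation L (swG Γ v₀ p r) (swA A B v₀ p r) (swB Γ A B v₀ p r) := by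
  obtain ⟨⟨hsym, hdiag⟩, ⟨c, hc0, hc⟩, hind, hspan⟩ := h
  rw [presRow_eq] at hind hspan
  have hrow := sw_row hsym hdiag A B v₀ hp r
  refine ⟨swG_lgraph ⟨hsym, hdiag⟩ v₀ p r, ⟨c, hc0, fun w => ?_⟩, ?_, ?_⟩
  · by_cases hw : w = v₀
    · subst hw
      have := hc w
      unfold detD at this ⊢
      simp only [swA, swB, if_pos rfl, ↓reduceIte, Prod.fst_add, Prod.snd_add, Prod.smul_fst,
        Prod.smul_snd, smul_eq_mul]
      field_simp
      linear_combination p * this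
    · have := hc w
      unfold detD at this ⊢
      simp only [swA, swB, if_neg hw, Prod.fst_add, Prod.snd_add, Prod.smul_fst,
        Prod.smul_snd, smul_eq_mul]
      linear_combination this
  · rw [presRow_eq, hrow]
    exact fam_addcol_indep v₀ hp _ hind
  · rw [presRow_eq, hrow, fam_addcol_span v₀ hp _ _]
    exact hspan

theorem swG_inv {Γ : Matrix V V F} (hΓ : IsLGraph Γ) (v₀ : V) {p : F} (hp : p ≠ 0)
    (r : F) : swG (swG Γ v₀ p r) v₀ p⁻¹ (-r) = Γ := by
  obtain ⟨hsym, hdiag⟩ := hΓ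
  ext u w
  by_cases hor : u = v₀ ∨ w = v₀
  · rw [swG_case1 _ _ _ _ hor, swG_case1 _ _ _ _ hor, inv_inv]
    field_simp
  · push_neg at hor
    obtain ⟨hu, hw⟩ := hor
    by_cases huw : u = w
    · subst huw
      rw [swG_case2 _ _ _ _ hu, hdiag u]
    · rw [swG_case3 _ _ _ _ hu hw huw, swG_case3 _ _ _ _ hu hw huw,
        swG_case1 _ _ _ _ (Or.inl rfl), swG_case1 _ _ _ _ (Or.inl rfl)]
      field_simp
      ring

theorem swA_rt (Γ : Matrix V V F) (A B : V → F × F) (v₀ : V) {p : F} (hp : p ≠ 0)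
    (r : F) : swA (swA A B v₀ p r) (swB Γ A B v₀ p r) v₀ p⁻¹ (-r) = A := by
  funext u
  by_cases hu : u = v₀
  · subst hu
    simp only [swA, swB, if_pos rfl, ↓reduceIte, if_true, eq_self_iff_true]
    apply Prod.ext <;>
    · simp only [Prod.fst_add, Prod.snd_add, Prod.smul_fst, Prod.smul_snd, smul_eq_mul]
      field_simp
      ring
  · simp [swA, hu]

theorem swB_rt {Γ : Matrix V V F} (hΓ : IsLGraph Γ) (A B : V → F × F) (v₀ : V)
    {p : F} (hp : p ≠ 0) (r : F) :
    swB (swG Γ v₀ p r) (swA A B v₀ p r) (swB Γ A B v₀ p r) v₀ p⁻¹ (-r) = B := by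
  funext u
  by_cases hu : u = v₀
  · subst hu
    simp [swB, smul_smul, mul_inv_cancel₀ hp]
  · simp only [swB, swA, if_neg hu, swG_case1 _ _ _ _ (Or.inl rfl)]
    apply Prod.ext <;>
    · simp only [Prod.fst_add, Prod.snd_add, Prod.smul_fst, Prod.smul_snd, smul_eq_mul]
      field_simp
      ring

theorem lam_switch {Γ : Matrix V V F} (hΓ : IsLGraph Γ) (v₀ : V) {p : F} (hp : p ≠ 0)
    (r : F) (L : Submodule F (V → F × F)) :
    lamCount L Γ = lamCount L (swG Γ v₀ p r) := by
  apply ncard_eq_of_maps _ _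
    (fun P : (V → F × F) × (V → F × F) => (swA P.1 P.2 v₀ p r, swB Γ P.1 P.2 v₀ p r))
    (fun P : (V → F × F) × (V → F × F) =>
      (swA P.1 P.2 v₀ p⁻¹ (-r), swB (swG Γ v₀ p r) P.1 P.2 v₀ p⁻¹ (-r)))
  · rintro ⟨A, B⟩ hAB
    exact pres_switch hAB v₀ hp r
  · rintro ⟨A, B⟩ hAB
    have := pres_switch hAB v₀ (inv_ne_zero hp) (-r)
    rwa [swG_inv hΓ v₀ hp r] at this
  · rintro ⟨A, B⟩ _
    show (swA (swA A B v₀ p r) (swB Γ A B v₀ p r) v₀ p⁻¹ (-r),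
          swB (swG Γ v₀ p r) (swA A B v₀ p r) (swB Γ A B v₀ p r) v₀ p⁻¹ (-r)) = (A, B)
    rw [swA_rt Γ A B v₀ hp r, swB_rt hΓ A B v₀ hp r]
  · rintro ⟨A, B⟩ _
    show (swA (swA A B v₀ p⁻¹ (-r)) (swB (swG Γ v₀ p r) A B v₀ p⁻¹ (-r)) v₀ p r,
          swB Γ (swA A B v₀ p⁻¹ (-r)) (swB (swG Γ v₀ p r) A B v₀ p⁻¹ (-r)) v₀ p r) = (A, B)
    have h1 := swA_rt (swG Γ v₀ p r) A B v₀ (inv_ne_zero hp) (-r)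
    rw [inv_inv, neg_neg] at h1
    have h2 := swB_rt (swG_lgraph hΓ v₀ p r) A B v₀ (inv_ne_zero hp) (-r)
    rw [inv_inv, neg_neg, swG_inv hΓ v₀ hp r] at h2
    rw [h1, h2]

end AuxB
section AuxC
variable {F : Type} [Field F] {V : Type} [Fintype V] [DecidableEq V]

theorem pres_unique {L : Submodule F (V → F × F)} {Γ Γ' : Matrix V V F} {A B B' : V → F × F}
    (h : IsGraphicPresentation L Γ A B) (h' : IsGraphicPresentation L Γ' A B') :
    ∃ e : F, e ≠ 0 ∧ Γ' = e • Γ := by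
  obtain ⟨c, hc0, hc⟩ := h.2.1
  obtain ⟨⟨hsym', hdiag'⟩, ⟨c', hc0', hc'⟩, hind', hspan'⟩ := h'
  rw [presRow_eq] at hspan'
  refine ⟨c' / c, div_ne_zero hc0' hc0, ?_⟩
  have hdet : ∀ w, detD A B w ≠ 0 := fun w => by rw [hc w]; exact hc0
  have key : ∀ v w, Γ' v w = c' / c * Γ v w := by
    intro v
    have hmem : rowFun Γ' A B' v ∈ L := by
      rw [← hspan']
      exact Submodule.subset_span (Set.mem_range_self v)
    obtain ⟨s, hs, hco⟩ := pres_coords h hmem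
    have hz : ∀ w, ¬ w = v → s w = 0 ∧ (∑ u, s u * Γ u w) = Γ' v w := by
      intro w hw
      have e1 := hco w
      have hvw' : ¬ v = w := fun hh => hw hh.symm
      have e0 : rowFun Γ' A B' v w = Γ' v w • A w := by
        simp [rowFun, hvw']
      rw [e0] at e1
      have e2 : ((∑ u, s u * Γ u w) - Γ' v w) • A w + s w • B w = 0 := by
        rw [sub_smul]
        calc (∑ u, s u * Γ u w) • A w - Γ' v w • A w + s w • B w
            = (s w • B w + (∑ u, s u * Γ u w) • A w) - Γ' v w • A w := by abel
          _ = 0 := by rw [← e1]; abel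
      obtain ⟨hx, hy⟩ := pair_indep (hdet w) e2
      exact ⟨hy, sub_eq_zero.1 hx⟩
    have hsv : s v = c' / c := by
      have e1 := hco v
      have e0 : rowFun Γ' A B' v v = B' v := by
        simp [rowFun, hdiag' v]
      rw [e0] at e1
      have hb1 : (B' v).1 = s v * (B v).1 + (∑ u, s u * Γ u v) * (A v).1 := by
        rw [e1]; simp
      have hb2 : (B' v).2 = s v * (B v).2 + (∑ u, s u * Γ u v) * (A v).2 := by
        rw [e1]; simp
      have hdv := hc' v
      have hcv := hc v
      unfold detD at hdv hcv
      rw [hb1, hb2] at hdv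
      have hfin : s v * c = c' := by linear_combination hdv - s v * hcv
      rw [eq_div_iff hc0]
      exact hfin
    intro w
    rcases eq_or_ne w v with hwv|hwv
    · subst hwv
      rw [hdiag' w, h.1.2 w, mul_zero]
    · rw [← (hz w hwv).2,
        Finset.sum_eq_single v (fun u _ hu => by rw [(hz u hu).1, zero_mul])
          (fun hv => absurd (Finset.mem_univ v) hv), hsv]
  ext v w
  rw [Matrix.smul_apply, smul_eq_mul]
  exact key v w

theorem lam_base {L : Submodule F (V → F × F)} {Γ Γ₁ : Matrix V V F}
    {A B A₁ B₁ : V → F × F} (h : IsGraphicPresentation L Γ A B)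
    (h₁ : IsGraphicPresentation L Γ₁ A₁ B₁)
    (hgood : ∀ v, ∃ t : F, A₁ v = t • A v) : lamCount L Γ = lamCount L Γ₁ := by
  choose t htt using hgood
  have ht : ∀ v, t v ≠ 0 := by
    intro v h0
    apply (pair_nonzero (presAB_ne h₁ v)).1
    rw [htt v, h0, zero_smul]
  have h2 := pres_rescale h t ht
  have hAeq : (fun v => t v • A v) = A₁ := funext fun v => (htt v).symm
  rw [hAeq] at h2
  obtain ⟨e, he0, heq⟩ := pres_unique h2 h₁
  rw [lam_resc t ht L Γ, heq, lam_smul he0]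

theorem lam_main {L : Submodule F (V → F × F)} {Γ₁ : Matrix V V F} {A₁ B₁ : V → F × F}
    (h₁ : IsGraphicPresentation L Γ₁ A₁ B₁) :
    ∀ (k : ℕ) (S : Finset V) (Γ : Matrix V V F) (A B : V → F × F),
      IsGraphicPresentation L Γ A B → (∀ v ∉ S, ∃ t : F, A₁ v = t • A v) →
      S.card ≤ k → lamCount L Γ = lamCount L Γ₁ := by
  intro k
  induction k with
  | zero =>
    intro S Γ A B h hS hcard
    have hSempty : S = ∅ := Finset.card_eq_zero.1 (le_antisymm hcard (Nat.zero_le _))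
    exact lam_base h h₁ (fun v => hS v (by simp [hSempty]))
  | succ k ih =>
    intro S Γ A B h hS hcard
    by_cases hall : ∀ v, ∃ t : F, A₁ v = t • A v
    · exact lam_base h h₁ hall
    push_neg at hall
    obtain ⟨v, hv⟩ := hall
    have hvS : v ∈ S := by
      by_contra hvn
      obtain ⟨t0, ht0⟩ := hS v hvn
      exact hv t0 ht0
    have hcard' : (S.erase v).card ≤ k := by
      have := Finset.card_erase_of_mem hvS
      omega
    obtain ⟨p, r, hpr⟩ := pair_expand (presAB_ne h v) (A₁ v)
    by_cases hp : p = 0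
    · -- A₁ v = r • B v ; find a bad neighbour u and do two switches
      subst hp
      rw [zero_smul, zero_add] at hpr
      have hr : r ≠ 0 := by
        intro h0
        apply (pair_nonzero (presAB_ne h₁ v)).1
        rw [hpr, h0, zero_smul]
      -- there is a neighbour u of v which is bad
      have hnb : ∃ u, Γ v u ≠ 0 ∧ ∀ t : F, A₁ u ≠ t • A u := by
        by_contra hno
        push_neg at hno
        -- every neighbour is good; derive a contradiction
        have hx : rowFun Γ A B v ∈ L := by
          rw [← h.2.2.2, presRow_eq]
          exact Submodule.subset_span (Set.mem_range_self v)
        have hmult : ∀ w, ∃ s : F, rowFun Γ A B v w = s • A₁ w := by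
          intro w
          rcases eq_or_ne w v with hwv|hwv
          · subst hwv
            refine ⟨r⁻¹, ?_⟩
            rw [hpr]
            simp [rowFun, h.1.2 w, smul_smul, inv_mul_cancel₀ hr]
          · by_cases hΓvw : Γ v w = 0
            · refine ⟨0, ?_⟩
              have hvw' : ¬ v = w := fun hh => hwv hh.symm
              simp [rowFun, hvw', hΓvw]
            · obtain ⟨tw, htw⟩ := hno w hΓvw
              have htw0 : tw ≠ 0 := by
                intro h0
                apply (pair_nonzero (presAB_ne h₁ w)).1
                rw [htw, h0, zero_smul]
              refine ⟨Γ v w * tw⁻¹, ?_⟩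
              rw [htw]
              have hvw' : ¬ v = w := fun hh => hwv hh.symm
              simp [rowFun, hvw', smul_smul, mul_assoc, inv_mul_cancel₀ htw0]
        have h0 := pres_hat h₁ hx hmult
        apply (pair_nonzero (presAB_ne h v)).2
        have := congrFun h0 v
        simpa [rowFun, h.1.2 v] using this
      obtain ⟨u, hu, hubad⟩ := hnb
      have huv : ¬ u = v := fun e => hu (e ▸ h.1.2 v)
      have huS : u ∈ S := by
        by_contra hun
        obtain ⟨t0, ht0⟩ := hS u hun
        exact hubad t0 ht0
      -- first switch at u
      have h1' := pres_switch h u one_ne_zero 1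
      -- second switch at v
      have hΓuv : Γ u v ≠ 0 := by
        rw [h.1.1.apply v u]; exact hu
      set p₂ : F := -(r * Γ u v ^ 2) with hp₂def
      have hp₂ : p₂ ≠ 0 := by
        simp only [hp₂def, neg_ne_zero]
        exact mul_ne_zero hr (pow_ne_zero 2 hΓuv)
      have h2' := pres_switch h1' v hp₂ r
      -- the new Eulerian vector agrees with A₁ at v and with A outside {u, v}
      have hvu : ¬ v = u := fun e => huv e.symm
      have hval : swA (swA A B u 1 1) (swB Γ A B u 1 1) v p₂ r v = A₁ v := by
        simp only [swA, swB, if_pos rfl, if_neg huv, if_neg hvu, if_true, eq_self_iff_true]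
        rw [hpr]
        apply Prod.ext <;>
        · simp only [Prod.fst_add, Prod.snd_add, Prod.smul_fst, Prod.smul_snd,
            smul_eq_mul, hp₂def]
          ring
      rw [lam_switch h.1 u one_ne_zero 1 L, lam_switch h1'.1 v hp₂ r L]
      apply ih (S.erase v) _ _ _ h2' _ hcard'
      intro w hw
      rw [Finset.mem_erase] at hw
      push_neg at hw
      rcases eq_or_ne w v with hwv|hwv
      · subst hwv
        refine ⟨1, ?_⟩
        rw [one_smul, hval]
      · have hwS : w ∉ S := hw hwv
        have hwu : ¬ w = u := fun e => hwS (e ▸ huS)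
        obtain ⟨t0, ht0⟩ := hS w hwS
        refine ⟨t0, ?_⟩
        rw [ht0]
        congr 1
        simp [swA, hwv, hwu]
    · -- p ≠ 0 : a single switch at v
      have h1' := pres_switch h v hp r
      rw [lam_switch h.1 v hp r L]
      apply ih (S.erase v) _ _ _ h1' _ hcard'
      intro w hw
      rw [Finset.mem_erase] at hw
      push_neg at hw
      rcases eq_or_ne w v with hwv|hwv
      · subst hwv
        refine ⟨1, ?_⟩
        rw [one_smul]
        simp only [swA, if_pos rfl]
        exact hpr
      · have hwS : w ∉ S := hw hwv
        obtain ⟨t0, ht0⟩ := hS w hwS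
        refine ⟨t0, ?_⟩
        rw [ht0]
        congr 1
        simp [swA, hwv]
end AuxC
/-- The number of pairs `(A,B)` making `(G,A,B)` a graphic presentation of `L`
does not depend on the choice of the fundamental graph `G`. -/
theorem lamCount_wellDefined (hchar : ringChar F ≠ 2)
    (L : Submodule F (V → F × F)) (hL : IsIsotropic L)
    (G H : Matrix V V F) (hG : IsFundamental L G) (hH : IsFundamental L H) :
    lamCount L G = lamCount L H := by
  classical
  obtain ⟨A, B, hGP⟩ := hG
  obtain ⟨A₁, B₁, hHP⟩ := hH
  exact lam_main hHP (Finset.univ.card) Finset.univ G A B hGP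
    (fun v hv => absurd (Finset.mem_univ v) hv) le_rfl
end

section
/- Let L be an isotropic system admitting G as a fundamental graph. Then λ(L) is equal to the number of pairs (A, B) ∈ K^V × K^V such that det D(A,B) = c·I for some nonzero c ∈ F_q and (I | G)·D(A,B)·M = 0, where M is the 2n×n block matrix with upper block G and lower block −I. In particular, λ(L) depends only on the fundamental graph G. -/
open Matrix

section Aux

variable {F : Type} [Field F] {V : Type} [Fintype V] [DecidableEq V]

/-- Pointwise 2×2 matrix multiplication on pairs encoding `Dmat`. -/
def pmAux (p q : (V → F × F) × (V → F × F)) : (V → F × F) × (V → F × F) :=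
  (fun v => ((p.1 v).1 * (q.2 v).1 + (p.1 v).2 * (q.1 v).1,
             (p.1 v).1 * (q.2 v).2 + (p.1 v).2 * (q.1 v).2),
   fun v => ((p.2 v).1 * (q.2 v).1 + (p.2 v).2 * (q.1 v).1,
             (p.2 v).1 * (q.2 v).2 + (p.2 v).2 * (q.1 v).2))

/-- Pointwise 2×2 adjugate. -/
def padjAux (p : (V → F × F) × (V → F × F)) : (V → F × F) × (V → F × F) :=
  (fun v => (-(p.1 v).1, (p.2 v).1), fun v => ((p.1 v).2, -(p.2 v).2))

lemma Dmat_pmAux (p q : (V → F × F) × (V → F × F)) :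
    Dmat (pmAux p q).1 (pmAux p q).2 = Dmat p.1 p.2 * Dmat q.1 q.2 := by
  ext i j
  rcases i with v | v <;> rcases j with w | w <;>
    rcases eq_or_ne v w with h | h <;>
      simp [Dmat, pmAux, mul_apply, Fintype.sum_sum_type, diagonal_apply, h] <;> ring

set_option linter.unusedSectionVars false

lemma detD_pmAux (p q : (V → F × F) × (V → F × F)) (v : V) :
    detD (pmAux p q).1 (pmAux p q).2 v = detD p.1 p.2 v * detD q.1 q.2 v := by
  simp only [detD, pmAux]; ring

lemma detD_padjAux (p : (V → F × F) × (V → F × F)) (v : V) :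
    detD (padjAux p).1 (padjAux p).2 v = detD p.1 p.2 v := by
  simp only [detD, padjAux]; ring

lemma Dmat_mul_padjAux (p : (V → F × F) × (V → F × F)) :
    Dmat p.1 p.2 * Dmat (padjAux p).1 (padjAux p).2 =
      diagonal (Sum.elim (detD p.1 p.2) (detD p.1 p.2)) := by
  ext i j
  rcases i with v | v <;> rcases j with w | w <;>
    rcases eq_or_ne v w with h | h <;>
      simp [Dmat, padjAux, detD, mul_apply, Fintype.sum_sum_type, diagonal_apply, h] <;> ring

lemma padjAux_mul_Dmat (p : (V → F × F) × (V → F × F)) :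
    Dmat (padjAux p).1 (padjAux p).2 * Dmat p.1 p.2 =
      diagonal (Sum.elim (detD p.1 p.2) (detD p.1 p.2)) := by
  ext i j
  rcases i with v | v <;> rcases j with w | w <;>
    rcases eq_or_ne v w with h | h <;>
      simp [Dmat, padjAux, detD, mul_apply, Fintype.sum_sum_type, diagonal_apply, h] <;> ring

lemma diag_const_eq_smul (c : F) (f : V → F) (h : ∀ v, f v = c) :
    diagonal (Sum.elim f f) = c • (1 : Matrix (V ⊕ V) (V ⊕ V) F) := by
  have hf : (Sum.elim f f : V ⊕ V → F) = fun _ => c := by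
    funext i; cases i <;> simp [h]
  rw [hf, ← Matrix.smul_one_eq_diagonal]

end Aux
section Aux2
set_option linter.unusedSectionVars false

variable {F : Type} [Field F] {V : Type} [Fintype V] [DecidableEq V]

lemma presRow_comb (Gm U : Matrix V V F) (q q' : (V → F × F) × (V → F × F))
    (h : fromCols (1 : Matrix V V F) Gm * Dmat q.1 q.2 = U * (fromCols (1 : Matrix V V F) Gm * Dmat q'.1 q'.2)) (v : V) :
    presRow Gm q.1 q.2 v = ∑ u, U v u • presRow Gm q'.1 q'.2 u := by
  funext w
  rw [Prod.ext_iff]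
  constructor
  · have h1 := congrFun (congrFun h v) (Sum.inl w)
    rw [Matrix.mul_apply (M := U)] at h1
    simp only [presRow, Finset.sum_apply, Pi.smul_apply, Prod.fst_sum, Prod.smul_fst,
      smul_eq_mul]
    exact h1
  · have h1 := congrFun (congrFun h v) (Sum.inr w)
    rw [Matrix.mul_apply (M := U)] at h1
    simp only [presRow, Finset.sum_apply, Pi.smul_apply, Prod.snd_sum, Prod.smul_snd,
      smul_eq_mul]
    exact h1

lemma comb_presRow (Gm : Matrix V V F) (U : V → V → F) (q q' : (V → F × F) × (V → F × F))
    (h : ∀ v, ∑ u, U v u • presRow Gm q'.1 q'.2 u = presRow Gm q.1 q.2 v) :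
    fromCols (1 : Matrix V V F) Gm * Dmat q.1 q.2 = Matrix.of U * (fromCols (1 : Matrix V V F) Gm * Dmat q'.1 q'.2) := by
  ext v j
  rcases j with w | w
  · have h1 := congrArg (fun f => (f w).1) (h v)
    simp only [presRow, Finset.sum_apply, Pi.smul_apply, Prod.fst_sum, Prod.smul_fst,
      smul_eq_mul] at h1
    conv_rhs => rw [Matrix.mul_apply]
    exact h1.symm
  · have h1 := congrArg (fun f => (f w).2) (h v)
    simp only [presRow, Finset.sum_apply, Pi.smul_apply, Prod.snd_sum, Prod.smul_snd,
      smul_eq_mul] at h1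
    conv_rhs => rw [Matrix.mul_apply]
    exact h1.symm

end Aux2
section Aux3
set_option linter.unusedSectionVars false

variable {F : Type} [Field F] {V : Type} [Fintype V] [DecidableEq V]

lemma pmAux_padjAux_cancel (p q : (V → F × F) × (V → F × F)) :
    pmAux (pmAux p (padjAux q)) q =
      (fun v => detD q.1 q.2 v • p.1 v, fun v => detD q.1 q.2 v • p.2 v) := by
  refine Prod.ext ?_ ?_ <;> funext v <;> refine Prod.ext ?_ ?_ <;>
    simp only [pmAux, padjAux, detD, Prod.smul_fst, Prod.smul_snd, smul_eq_mul] <;> ring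

lemma pmAux_cancel_padjAux (p q : (V → F × F) × (V → F × F)) :
    pmAux (pmAux p q) (padjAux q) =
      (fun v => detD q.1 q.2 v • p.1 v, fun v => detD q.1 q.2 v • p.2 v) := by
  refine Prod.ext ?_ ?_ <;> funext v <;> refine Prod.ext ?_ ?_ <;>
    simp only [pmAux, padjAux, detD, Prod.smul_fst, Prod.smul_snd, smul_eq_mul] <;> ring

lemma cruxB (L : Submodule F (V → F × F)) (Gm : Matrix V V F)
    (p p₀ : (V → F × F) × (V → F × F))
    (hp : IsGraphicPresentation L Gm p.1 p.2) (hp₀ : IsGraphicPresentation L Gm p₀.1 p₀.2) :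
    fromCols (1 : Matrix V V F) Gm * Dmat p.1 p.2 * Dmat (padjAux p₀).1 (padjAux p₀).2 *
      fromRows Gm (-(1 : Matrix V V F)) = 0 := by
  obtain ⟨-, ⟨c₀, hc₀, hd₀⟩, -, hspan₀⟩ := hp₀
  obtain ⟨-, -, -, hspan⟩ := hp
  have hmem : ∀ v, presRow Gm p.1 p.2 v ∈
      Submodule.span F (Set.range (presRow Gm p₀.1 p₀.2)) := by
    intro v
    rw [hspan₀, ← hspan]
    exact Submodule.subset_span ⟨v, rfl⟩
  choose U hU using fun v => (Submodule.mem_span_range_iff_exists_fun F).mp (hmem v)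
  have hN := comb_presRow Gm U p p₀ hU
  have key : fromCols (1 : Matrix V V F) Gm *
      (Dmat p₀.1 p₀.2 * (Dmat (padjAux p₀).1 (padjAux p₀).2 * fromRows Gm (-(1 : Matrix V V F)))) = 0 := by
    rw [← Matrix.mul_assoc (Dmat p₀.1 p₀.2), Dmat_mul_padjAux, diag_const_eq_smul c₀ _ hd₀,
      Matrix.smul_mul, Matrix.one_mul, Matrix.mul_smul, fromCols_mul_fromRows]
    simp
  rw [hN]
  simp only [Matrix.mul_assoc]
  rw [key, mul_zero]

end Aux3
section Aux4
set_option linter.unusedSectionVars false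

variable {F : Type} [Field F] {V : Type} [Fintype V] [DecidableEq V]

lemma cruxA (L : Submodule F (V → F × F)) (Gm : Matrix V V F)
    (p p₀ : (V → F × F) × (V → F × F))
    (hp₀ : IsGraphicPresentation L Gm p₀.1 p₀.2)
    (hdet : ∃ c : F, c ≠ 0 ∧ ∀ v, detD p.1 p.2 v = c)
    (hmat : fromCols (1 : Matrix V V F) Gm * Dmat p.1 p.2 *
      Dmat (padjAux p₀).1 (padjAux p₀).2 * fromRows Gm (-(1 : Matrix V V F)) = 0) :
    IsGraphicPresentation L Gm p.1 p.2 := by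
  obtain ⟨hLG, ⟨c₀, hc₀, hd₀⟩, hli₀, hspan₀⟩ := hp₀
  obtain ⟨c, hc, hd⟩ := hdet
  have hcc : c₀ * c ≠ 0 := mul_ne_zero hc₀ hc
  set IG := fromCols (1 : Matrix V V F) Gm with hIGdef
  set Dp := Dmat p.1 p.2 with hDpdef
  set Dp₀ := Dmat p₀.1 p₀.2 with hDp0def
  set Ap := Dmat (padjAux p).1 (padjAux p).2 with hApdef
  set Ap₀ := Dmat (padjAux p₀).1 (padjAux p₀).2 with hAp0def
  have hDpAp : Dp * Ap = c • 1 := by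
    rw [hDpdef, hApdef, Dmat_mul_padjAux, diag_const_eq_smul c _ hd]
  have hAp0Dp0 : Ap₀ * Dp₀ = c₀ • 1 := by
    rw [hDp0def, hAp0def, padjAux_mul_Dmat, diag_const_eq_smul c₀ _ hd₀]
  set E : Matrix (V ⊕ V) (V ⊕ V) F := Dp * Ap₀ with hEdef
  have hmat' : IG * E * fromRows Gm (-(1 : Matrix V V F)) = 0 := by
    rw [hEdef, ← Matrix.mul_assoc]; exact hmat
  set P : Matrix V V F := Matrix.of (fun v w => (IG * E) v (Sum.inl w)) with hPdef
  have hPIG : IG * E = P * IG := by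
    ext v j
    rcases j with w | w
    · conv_rhs => rw [Matrix.mul_apply]
      simp only [hIGdef, fromCols_apply_inl, Matrix.one_apply, mul_ite, mul_one, mul_zero,
        Finset.sum_ite_eq', Finset.mem_univ, if_true]
      simp [hPdef]; rfl
    · have h0 := congrFun (congrFun hmat' v) w
      rw [Matrix.mul_apply, Fintype.sum_sum_type] at h0
      simp only [fromRows_apply_inl, fromRows_apply_inr, Matrix.neg_apply, Matrix.one_apply,
        mul_neg, mul_ite, mul_one, mul_zero, Finset.sum_neg_distrib, Finset.sum_ite_eq',
        Finset.mem_univ, if_true, Matrix.zero_apply] at h0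
      conv_rhs => rw [Matrix.mul_apply]
      have hterm : ∀ x : V, P v x * IG x (Sum.inr w) = (IG * E) v (Sum.inl x) * Gm x w := by
        intro x
        have e1 : P v x = (IG * E) v (Sum.inl x) := rfl
        have e2 : IG x (Sum.inr w) = Gm x w := by rw [hIGdef, fromCols_apply_inr]
        rw [e1, e2]
      rw [Finset.sum_congr rfl fun x _ => hterm x]
      linear_combination -h0
  set E' : Matrix (V ⊕ V) (V ⊕ V) F := Dp₀ * Ap with hE'def
  have hEE' : E * E' = (c₀ * c) • 1 := by
    have h5 : E * E' = Dp * ((Ap₀ * Dp₀) * Ap) := by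
      rw [hEdef, hE'def]; simp only [Matrix.mul_assoc]
    rw [h5, hAp0Dp0, Matrix.smul_mul, Matrix.one_mul, Matrix.mul_smul, hDpAp, smul_smul]
  set R : Matrix V V F := Matrix.of (fun v w => (IG * E') v (Sum.inl w)) with hRdef
  have h2 : P * (IG * E') = (c₀ * c) • IG := by
    rw [← Matrix.mul_assoc, ← hPIG, Matrix.mul_assoc, hEE', Matrix.mul_smul, Matrix.mul_one]
  have hPR : P * R = (c₀ * c) • 1 := by
    ext v w
    have h3 := congrFun (congrFun h2 v) (Sum.inl w)
    rw [Matrix.mul_apply] at h3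
    conv_lhs => rw [Matrix.mul_apply]
    simp only [hIGdef, fromCols_apply_inl, Matrix.smul_apply, smul_eq_mul] at h3 ⊢
    rw [← h3]
    simp [hRdef]; rfl
  set Q : Matrix V V F := (c₀ * c)⁻¹ • R with hQdef
  have hRP : Q * P = 1 := by
    refine mul_eq_one_comm.mp ?_
    rw [hQdef, Matrix.mul_smul, hPR, smul_smul, inv_mul_cancel₀ hcc, one_smul]
  have h1 : E * Dp₀ = c₀ • Dp := by
    rw [hEdef, Matrix.mul_assoc, hAp0Dp0, Matrix.mul_smul, Matrix.mul_one]
  have hND : c₀ • (IG * Dp) = P * (IG * Dp₀) := by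
    rw [← Matrix.mul_smul IG, ← h1, ← Matrix.mul_assoc, hPIG, Matrix.mul_assoc]
  have hN : IG * Dp = (c₀⁻¹ • P) * (IG * Dp₀) := by
    rw [Matrix.smul_mul, ← hND, smul_smul, inv_mul_cancel₀ hc₀, one_smul]
  have h4 : Q * (c₀ • (IG * Dp)) = IG * Dp₀ := by
    rw [hND, ← Matrix.mul_assoc, hRP, Matrix.one_mul]
  have hN₀ : IG * Dp₀ = (c₀ • Q) * (IG * Dp) := by
    rw [← h4]
    simp only [hQdef, Matrix.smul_mul, Matrix.mul_smul, smul_smul]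
    try rw [mul_comm]
  refine ⟨hLG, ⟨c, hc, hd⟩, ?_, ?_⟩
  · rw [Fintype.linearIndependent_iff]
    intro a ha i
    have hrow : ∀ j, (∑ v, a v * (IG * Dp) v j) = 0 := by
      intro j
      rcases j with w | w
      · have hc1 := congrArg (fun f => (f w).1) ha
        simpa [presRow, Finset.sum_apply, Prod.fst_sum, Prod.smul_fst, smul_eq_mul,
          ← hIGdef, ← hDpdef] using hc1
      · have hc1 := congrArg (fun f => (f w).2) ha
        simpa [presRow, Finset.sum_apply, Prod.snd_sum, Prod.smul_snd, smul_eq_mul,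
          ← hIGdef, ← hDpdef] using hc1
    have hNA : (IG * Dp) * Ap = c • IG := by
      rw [Matrix.mul_assoc, hDpAp, Matrix.mul_smul, Matrix.mul_one]
    have hvm : Matrix.vecMul a (IG * Dp) = 0 := by
      funext j
      simpa [Matrix.vecMul, dotProduct] using hrow j
    have h6 : Matrix.vecMul a ((IG * Dp) * Ap) = 0 := by
      rw [← Matrix.vecMul_vecMul, hvm, Matrix.zero_vecMul]
    rw [hNA] at h6
    have h7 := congrFun h6 (Sum.inl i)
    simp only [Matrix.vecMul, dotProduct, hIGdef, fromCols_apply_inl,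
      Matrix.smul_apply, Matrix.one_apply, smul_eq_mul, mul_ite, mul_one, mul_zero,
      Finset.sum_ite_eq', Finset.mem_univ, if_true, Pi.zero_apply] at h7
    simp only [mul_eq_zero, hc, false_or, or_false] at h7
    exact h7
  · apply le_antisymm
    · rw [Submodule.span_le]
      rintro x ⟨v, rfl⟩
      rw [presRow_comb Gm (c₀⁻¹ • P) p p₀ hN v]
      exact Submodule.sum_mem _ fun u _ =>
        Submodule.smul_mem _ _ (hspan₀ ▸ Submodule.subset_span ⟨u, rfl⟩)
    · rw [← hspan₀, Submodule.span_le]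
      rintro x ⟨v, rfl⟩
      rw [presRow_comb Gm (c₀ • Q) p₀ p hN₀ v]
      exact Submodule.sum_mem _ fun u _ =>
        Submodule.smul_mem _ _ (Submodule.subset_span ⟨u, rfl⟩)

end Aux4
section Aux5
set_option linter.unusedSectionVars false

variable {F : Type} [Field F] {V : Type} [Fintype V] [DecidableEq V]

lemma pair_scale_inj (c : F) (hc : c ≠ 0) (f : V → F) (hf : ∀ v, f v = c)
    (p q : (V → F × F) × (V → F × F))
    (h : ((fun v => f v • p.1 v, fun v => f v • p.2 v) : (V → F × F) × (V → F × F))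
       = (fun v => f v • q.1 v, fun v => f v • q.2 v)) : p = q := by
  refine Prod.ext ?_ ?_ <;> funext v
  · have h1 := congrFun (congrArg Prod.fst h) v
    dsimp at h1
    rw [hf v] at h1
    exact smul_right_injective (F × F) hc h1
  · have h1 := congrFun (congrArg Prod.snd h) v
    dsimp at h1
    rw [hf v] at h1
    exact smul_right_injective (F × F) hc h1

end Aux5

variable {F : Type} [Field F] [Fintype F] {V : Type} [Fintype V] [DecidableEq V] [Nonempty V]


/-- `λ(L)` equals the number of pairs `(A,B)` with `det D(A,B)` a nonzero
constant and `(I | G)·D(A,B)·[[G],[−I]] = 0`. -/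
theorem lamCount_eq_solutions (hchar : ringChar F ≠ 2)
    (L : Submodule F (V → F × F)) (hL : IsIsotropic L)
    (G : Matrix V V F) (hG : IsFundamental L G) :
    lamCount L G = Set.ncard {p : (V → F × F) × (V → F × F) |
      (∃ c : F, c ≠ 0 ∧ ∀ v, detD p.1 p.2 v = c) ∧
      fromCols (1 : Matrix V V F) G * Dmat p.1 p.2 *
        fromRows G (-(1 : Matrix V V F)) = 0} := by
  classical
  obtain ⟨A₀, B₀, hp₀'⟩ := hG
  set p₀ : (V → F × F) × (V → F × F) := (A₀, B₀) with hp₀def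
  have hp₀ : IsGraphicPresentation L G p₀.1 p₀.2 := hp₀'
  obtain ⟨c₀, hc₀, hd₀⟩ := hp₀.2.1
  set S₁ := {p : (V → F × F) × (V → F × F) | IsGraphicPresentation L G p.1 p.2} with hS₁
  set S₂ := {p : (V → F × F) × (V → F × F) |
      (∃ c : F, c ≠ 0 ∧ ∀ v, detD p.1 p.2 v = c) ∧
      fromCols (1 : Matrix V V F) G * Dmat p.1 p.2 *
        fromRows G (-(1 : Matrix V V F)) = 0} with hS₂
  show S₁.ncard = S₂.ncard
  have hφ : ∀ p ∈ S₁, pmAux p (padjAux p₀) ∈ S₂ := by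
    intro p hp
    have hp' : IsGraphicPresentation L G p.1 p.2 := hp
    obtain ⟨c, hc, hd⟩ := hp'.2.1
    constructor
    · refine ⟨c * c₀, mul_ne_zero hc hc₀, fun v => ?_⟩
      rw [detD_pmAux, detD_padjAux, hd, hd₀]
    · show fromCols (1 : Matrix V V F) G *
        Dmat (pmAux p (padjAux p₀)).1 (pmAux p (padjAux p₀)).2 *
        fromRows G (-(1 : Matrix V V F)) = 0
      rw [Dmat_pmAux, ← Matrix.mul_assoc]
      exact cruxB L G p p₀ hp' hp₀
  have hψ : ∀ p ∈ S₂, pmAux p p₀ ∈ S₁ := by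
    rintro p ⟨⟨c, hc, hd⟩, hm⟩
    refine cruxA L G (pmAux p p₀) p₀ hp₀ ?_ ?_
    · exact ⟨c * c₀, mul_ne_zero hc hc₀, fun v => by rw [detD_pmAux, hd, hd₀]⟩
    · rw [Dmat_pmAux]
      have h1 : Dmat p₀.1 p₀.2 * Dmat (padjAux p₀).1 (padjAux p₀).2 = c₀ • 1 := by
        rw [Dmat_mul_padjAux, diag_const_eq_smul c₀ _ hd₀]
      simp only [Matrix.mul_assoc]
      rw [← Matrix.mul_assoc (Dmat p₀.1 p₀.2) (Dmat (padjAux p₀).1 (padjAux p₀).2)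
        (fromRows G (-(1 : Matrix V V F))), h1, Matrix.smul_mul, Matrix.one_mul,
        Matrix.mul_smul, Matrix.mul_smul, ← Matrix.mul_assoc, hm, smul_zero]
  have hinjφ : Set.InjOn (fun p => pmAux p (padjAux p₀)) S₁ := by
    intro p _ q _ h
    have h2 := congrArg (fun r => pmAux r p₀) h
    simp only [pmAux_padjAux_cancel] at h2
    exact pair_scale_inj c₀ hc₀ _ hd₀ p q h2
  have hinjψ : Set.InjOn (fun p => pmAux p p₀) S₂ := by
    intro p _ q _ h
    have h2 := congrArg (fun r => pmAux r (padjAux p₀)) h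
    simp only [pmAux_cancel_padjAux] at h2
    exact pair_scale_inj c₀ hc₀ _ hd₀ p q h2
  have le1 : S₁.ncard ≤ S₂.ncard := by
    rw [← Set.ncard_image_of_injOn hinjφ]
    refine Set.ncard_le_ncard ?_ (Set.toFinite S₂)
    rintro x ⟨p, hp, rfl⟩
    exact hφ p hp
  have le2 : S₂.ncard ≤ S₁.ncard := by
    rw [← Set.ncard_image_of_injOn hinjψ]
    refine Set.ncard_le_ncard ?_ (Set.toFinite S₁)
    rintro x ⟨p, hp, rfl⟩
    exact hψ p hp
  omega
end

section
/- Let G be a connected labeled graph on V over F_q, and let N denote the number of labeled graphs H on V such that H is locally equivalent to cG for some nonzero c ∈ F_q. Then N = l(G) or N = 2·l(G). -/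
open Matrix

set_option linter.unusedSectionVars false

section Work

variable {F : Type} [Field F] {V : Type} [Fintype V] [DecidableEq V]

lemma starOp_starOp (G : Matrix V V F) (r : F) (v : V) :
    starOp (starOp G r v) (-r) v = G := by
  ext u w
  simp only [starOp, Matrix.of_apply]
  by_cases h : u = v ∨ w = v ∨ u = w
  · rw [if_pos h, if_pos h]
  · rw [if_neg h, if_neg h]
    simp only [true_or, if_true]
    ring

lemma circOp_circOp (G : Matrix V V F) {s : F} (hs : s ≠ 0) (v : V) :
    circOp (circOp G s v) s⁻¹ v = G := by
  ext u w
  simp only [circOp, Matrix.of_apply]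
  by_cases h : u = v ∨ w = v
  · simp [h, ← mul_assoc, inv_mul_cancel₀ hs]
  · simp [h]

lemma localStep_symm {G H : Matrix V V F} (h : LocalStep G H) : LocalStep H G := by
  rcases h with ⟨v, r, rfl⟩ | ⟨v, s, hs, rfl⟩
  · exact Or.inl ⟨v, -r, (starOp_starOp G r v).symm⟩
  · exact Or.inr ⟨v, s⁻¹, inv_ne_zero hs, (circOp_circOp G hs v).symm⟩

lemma le_symm {G H : Matrix V V F} (h : LocallyEquivalent G H) : LocallyEquivalent H G :=
  by haveI : Std.Symm (LocalStep (F := F) (V := V)) := ⟨fun _ _ h => localStep_symm h⟩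
     exact Relation.ReflTransGen.symmetric.symm _ _ h

lemma leTrans' {G H K : Matrix V V F} (h : LocallyEquivalent G H)
    (h2 : LocallyEquivalent H K) : LocallyEquivalent G K := h.trans h2

lemma smul_starOp (c r : F) (hc : c ≠ 0) (G : Matrix V V F) (v : V) :
    c • starOp G r v = starOp (c • G) (r / c) v := by
  ext u w
  simp only [starOp, Matrix.smul_apply, Matrix.of_apply, smul_eq_mul]
  split
  · rfl
  · field_simp

lemma smul_circOp (c s : F) (G : Matrix V V F) (v : V) :
    c • circOp G s v = circOp (c • G) s v := by
  ext u w
  simp only [circOp, Matrix.smul_apply, Matrix.of_apply, smul_eq_mul]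
  split <;> ring

lemma le_smul {G H : Matrix V V F} (c : F) (hc : c ≠ 0)
    (h : LocallyEquivalent G H) : LocallyEquivalent (c • G) (c • H) := by
  induction h with
  | refl => exact Relation.ReflTransGen.refl
  | tail _ hstep ih =>
    refine ih.tail ?_
    rcases hstep with ⟨v, r, rfl⟩ | ⟨v, s, hs, rfl⟩
    · exact Or.inl ⟨v, r / c, smul_starOp c r hc _ v⟩
    · exact Or.inr ⟨v, s, hs, smul_circOp c s _ v⟩

def scaleT (G : Matrix V V F) (s : F) (T : Finset V) : Matrix V V F :=
  Matrix.of fun u w => if u ∈ T then (if w ∈ T then s^2 * G u w else s * G u w)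
    else (if w ∈ T then s * G u w else G u w)

lemma le_scaleT (G : Matrix V V F) (hG : ∀ v, G v v = 0) {s : F} (hs : s ≠ 0) (T : Finset V) :
    LocallyEquivalent G (scaleT G s T) := by
  classical
  induction T using Finset.induction_on with
  | empty =>
    have : scaleT G s (∅ : Finset V) = G := by ext u w; simp [scaleT]
    rw [this]
    exact Relation.ReflTransGen.refl
  | @insert v T hv ih =>
    refine ih.tail (Or.inr ⟨v, s, hs, ?_⟩)
    ext u w
    simp only [scaleT, circOp, Matrix.of_apply, Finset.mem_insert]
    by_cases hu : u = v <;> by_cases hw : w = v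
    · subst hu; subst hw; simp [hv, hG]
    · subst hu
      by_cases hwT : w ∈ T <;> simp [hv, hwT, hw] <;> ring
    · subst hw
      by_cases huT : u ∈ T <;> simp [hv, huT, hu] <;> ring
    · by_cases huT : u ∈ T <;> by_cases hwT : w ∈ T <;> simp [hu, hw, huT, hwT]

lemma le_sq_smul (G : Matrix V V F) (hG : ∀ v, G v v = 0) {s : F} (hs : s ≠ 0) :
    LocallyEquivalent G ((s ^ 2) • G) := by
  have h := le_scaleT G hG hs (Finset.univ : Finset V)
  have h2 : scaleT G s (Finset.univ : Finset V) = (s ^ 2) • G := by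
    ext u w; simp [scaleT]
  rwa [h2] at h

end Work


variable {F : Type} [Field F] [Fintype F] {V : Type} [Fintype V] [DecidableEq V] [Nonempty V]


/-- The number of graphs locally equivalent to some nonzero scalar multiple of
a connected graph `G` is `l(G)` or `2·l(G)`. -/
theorem count_smul_classes (hchar : ringChar F ≠ 2)
    (G : Matrix V V F) (hG : IsLGraph G) (hconn : GraphConnected G) :
    Set.ncard {H : Matrix V V F | ∃ c : F, c ≠ 0 ∧ LocallyEquivalent (c • G) H}
        = locCount G ∨
    Set.ncard {H : Matrix V V F | ∃ c : F, c ≠ 0 ∧ LocallyEquivalent (c • G) H}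
        = 2 * locCount G := by
  classical
  obtain ⟨a, ha⟩ := FiniteField.exists_nonsquare (F := F) hchar
  have ha0 : a ≠ 0 := by rintro rfl; exact ha ⟨0, by simp⟩
  set S := {H : Matrix V V F | ∃ c : F, c ≠ 0 ∧ LocallyEquivalent (c • G) H} with hS
  set C1 := {H : Matrix V V F | LocallyEquivalent G H} with hC1
  set C2 := {H : Matrix V V F | LocallyEquivalent (a • G) H} with hC2def
  have haGd : ∀ v, (a • G) v v = 0 := by intro v; simp [hG.2 v]
  have key : ∀ c : F, c ≠ 0 →
      (LocallyEquivalent G (c • G) ∨ LocallyEquivalent (a • G) (c • G)) := by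
    intro c hc
    by_cases hsq : IsSquare c
    · obtain ⟨d, rfl⟩ := hsq
      have hd : d ≠ 0 := by rintro rfl; simp at hc
      left
      have h := le_sq_smul G hG.2 hd
      rwa [pow_two] at h
    · right
      have hca : c * a⁻¹ ≠ 0 := mul_ne_zero hc (inv_ne_zero ha0)
      have hsq2 : IsSquare (c * a⁻¹) := by
        have h1 : quadraticChar F c = -1 := quadraticChar_neg_one_iff_not_isSquare.mpr hsq
        have h2 : quadraticChar F a = -1 := quadraticChar_neg_one_iff_not_isSquare.mpr ha
        have h3 : quadraticChar F (c * a⁻¹) * quadraticChar F a = quadraticChar F c := by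
          rw [← _root_.map_mul]
          congr 1
          field_simp
        rw [h1, h2] at h3
        have h4 : quadraticChar F (c * a⁻¹) = 1 := by linarith [h3]
        exact (quadraticChar_one_iff_isSquare hca).mp h4
      obtain ⟨d, hd⟩ := hsq2
      have hd0 : d ≠ 0 := by rintro rfl; rw [mul_zero] at hd; exact hca hd
      have h := le_sq_smul (a • G) haGd hd0
      have heq : (d ^ 2) • (a • G) = c • G := by
        rw [smul_smul]
        congr 1
        rw [pow_two, ← hd]
        field_simp
      rwa [heq] at h
  have hSS : S = C1 ∪ C2 := by
    ext H
    constructor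
    · rintro ⟨c, hc, hH⟩
      rcases key c hc with h | h
      · exact Or.inl (h.trans hH)
      · exact Or.inr (h.trans hH)
    · rintro (h | h)
      · exact ⟨1, one_ne_zero, by simpa [hC1] using h⟩
      · exact ⟨a, ha0, h⟩
  by_cases hcase : LocallyEquivalent G (a • G)
  · left
    have h12 : C2 = C1 := by
      ext H
      exact ⟨fun h => hcase.trans h, fun h => (le_symm hcase).trans h⟩
    rw [hSS, h12, Set.union_self]
    rfl
  · right
    have hdisj : Disjoint C1 C2 := by
      rw [Set.disjoint_left]
      intro H h1 h2
      exact hcase (h1.trans (le_symm h2))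
    have hC2img : C2 = (fun H : Matrix V V F => a • H) '' C1 := by
      ext H
      constructor
      · intro h
        refine ⟨a⁻¹ • H, ?_, by simp [smul_smul, mul_inv_cancel₀ ha0]⟩
        have h' := le_smul a⁻¹ (inv_ne_zero ha0) h
        simpa [hC1, smul_smul, inv_mul_cancel₀ ha0] using h'
      · rintro ⟨H', h', rfl⟩
        exact le_smul a ha0 h'
    have hcard : C2.ncard = C1.ncard := by
      rw [hC2img,
        Set.ncard_image_of_injective _ (smul_right_injective (Matrix V V F) ha0)]
    rw [hSS, Set.ncard_union_eq hdisj (Set.toFinite _) (Set.toFinite _), hcard, two_mul]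
    rfl
end

section
/- For every isotropic system L on a vertex set V with |V| = n ≥ 1, the number ε(L) of Eulerian vectors of L satisfies (q² − q)^{n−1} ≤ ε(L) ≤ (q² − 1)^n. -/
open Matrix

variable {F : Type} [Field F] [Fintype F] {V : Type} [Fintype V] [DecidableEq V] [Nonempty V]




section Lemmas
set_option linter.unusedSectionVars false

variable {F : Type} [Field F] {V : Type} [Fintype V] [DecidableEq V]

lemma formK_smul_left (c : F) (a b : F × F) : formK (c • a) b = c * formK a b := by
  simp [formK]; ring

lemma formK_self (a : F × F) : formK a a = 0 := by simp [formK, mul_comm]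

lemma formK_skew (a b : F × F) : formK a b = - formK b a := by simp [formK]

/-- key 2-dim lemma: orthogonality forces colinearity -/
lemma formK_eq_zero_iff {x y : F × F} (hx : x ≠ 0) :
    formK y x = 0 ↔ ∃ c : F, y = c • x := by
  constructor
  · intro h
    have hyx : y.1 * x.2 = x.1 * y.2 := sub_eq_zero.mp h
    rcases eq_or_ne x.1 0 with h1 | h1
    · have h2 : x.2 ≠ 0 := fun h2 => hx (Prod.ext h1 h2)
      refine ⟨y.2 / x.2, Prod.ext ?_ ?_⟩ <;>
        simp only [Prod.smul_fst, Prod.smul_snd, smul_eq_mul]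
      · rw [h1, mul_zero]
        have : y.1 * x.2 = 0 := by rw [hyx, h1, zero_mul]
        exact (mul_eq_zero.mp this).resolve_right h2
      · field_simp
    · refine ⟨y.1 / x.1, Prod.ext ?_ ?_⟩ <;>
        simp only [Prod.smul_fst, Prod.smul_snd, smul_eq_mul]
      · field_simp
      · field_simp
        linear_combination -hyx
  · rintro ⟨c, rfl⟩
    rw [formK_smul_left, formK_self, mul_zero]

/-- the bilinear form on K^V as a mathlib BilinForm -/
noncomputable def bformKV : LinearMap.BilinForm F (V → F × F) :=
  LinearMap.mk₂ F (fun A B => formKV A B)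
    (by
      intro A A' B
      simp only [formKV, formK, Prod.fst_add, Prod.snd_add, Pi.add_apply,
        ← Finset.sum_add_distrib]
      exact Finset.sum_congr rfl fun v _ => by ring)
    (by
      intro c A B
      simp only [formKV, formK, Pi.smul_apply, Prod.smul_fst, Prod.smul_snd,
        smul_eq_mul, Finset.mul_sum]
      exact Finset.sum_congr rfl fun v _ => by ring)
    (by
      intro A B B'
      simp only [formKV, formK, Prod.fst_add, Prod.snd_add, Pi.add_apply,
        ← Finset.sum_add_distrib]
      exact Finset.sum_congr rfl fun v _ => by ring)
    (by
      intro c A B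
      simp only [formKV, formK, Pi.smul_apply, Prod.smul_fst, Prod.smul_snd,
        smul_eq_mul, Finset.mul_sum]
      exact Finset.sum_congr rfl fun v _ => by ring)

@[simp] lemma bformKV_apply (A B : V → F × F) : bformKV A B = formKV A B := by
  simp [bformKV]

lemma bformKV_isRefl : (bformKV : LinearMap.BilinForm F (V → F × F)).IsRefl := by
  intro A B h
  simp only [bformKV_apply, formKV] at h ⊢
  have : ∑ v, formK (B v) (A v) = - ∑ v, formK (A v) (B v) := by
    rw [← Finset.sum_neg_distrib]
    exact Finset.sum_congr rfl fun v _ => formK_skew _ _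
  rw [this, h, neg_zero]

lemma formKV_Ev (A : V → F × F) (v : V) (x : F × F) :
    formKV A (Ev v x) = formK (A v) x := by
  rw [formKV, Finset.sum_eq_single v]
  · simp [Ev]
  · intro w _ hw; simp [Ev, hw, formK]
  · simp

lemma bformKV_nondegenerate :
    (bformKV : LinearMap.BilinForm F (V → F × F)).Nondegenerate := by
  have hl : ∀ A : V → F × F, (∀ B, bformKV A B = 0) → A = 0 := by
    intro A h
    funext v
    have h1 := h (Ev v (0, 1))
    have h2 := h (Ev v (1, 0))
    rw [bformKV_apply, formKV_Ev] at h1 h2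
    simp only [formK, mul_one, mul_zero, zero_mul, sub_zero, one_mul, zero_sub,
      neg_eq_zero] at h1 h2
    exact Prod.ext h1 h2
  exact ⟨hl, fun A h => hl A fun B => bformKV_isRefl _ _ (h B)⟩

/-- totally isotropic subspaces have dimension at most n -/
lemma isotropic_finrank_le (L : Submodule F (V → F × F))
    (h : ∀ A ∈ L, ∀ B ∈ L, formKV A B = 0) :
    Module.finrank F L ≤ Fintype.card V := by
  have hle : L ≤ LinearMap.BilinForm.orthogonal bformKV L := by
    intro A hA
    intro B hB
    have := h B hB A hA
    simpa [LinearMap.BilinForm.IsOrtho] using this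
  have := LinearMap.BilinForm.finrank_add_finrank_orthogonal
    (B := (bformKV : LinearMap.BilinForm F (V → F × F))) bformKV_isRefl L
  rw [LinearMap.BilinForm.orthogonal_top_eq_bot bformKV_nondegenerate] at this
  have hdim : Module.finrank F (V → F × F) = 2 * Fintype.card V := by
    simp [Module.finrank_pi_fintype, Module.finrank_prod]
    ring
  have hmono := Submodule.finrank_mono hle
  have : Module.finrank F L + Module.finrank F (LinearMap.BilinForm.orthogonal bformKV L)
      = 2 * Fintype.card V := by
    rw [this, hdim]; simp
  omega

end Lemmas

section Hat
set_option linter.unusedSectionVars false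
variable {F : Type} [Field F] {V : Type} [Fintype V] [DecidableEq V]

lemma Ev_smul (v : V) (c : F) (x : F × F) : Ev v (c • x) = c • Ev v x := by
  funext w; by_cases h : w = v <;> simp [Ev, h]

/-- the submodule of vectors pointwise colinear with A -/
def colinSub (A : V → F × F) : Submodule F (V → F × F) where
  carrier := {B | ∀ w, ∃ c : F, B w = c • A w}
  add_mem' := by
    rintro B B' hB hB' w
    obtain ⟨c, hc⟩ := hB w; obtain ⟨c', hc'⟩ := hB' w
    exact ⟨c + c', by simp [hc, hc', add_smul]⟩
  zero_mem' := fun w => ⟨0, by simp⟩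
  smul_mem' := by
    rintro c B hB w
    obtain ⟨c', h⟩ := hB w
    exact ⟨c * c', by simp [h, smul_smul]⟩

lemma mem_hatSub_iff {A B : V → F × F} :
    B ∈ hatSub A ↔ ∀ w, ∃ c : F, B w = c • A w := by
  constructor
  · intro h
    have hle : hatSub A ≤ colinSub A := by
      rw [hatSub, Submodule.span_le]
      rintro _ ⟨v, rfl⟩ w
      by_cases hw : w = v
      · exact ⟨1, by simp [Ev, hw]⟩
      · exact ⟨0, by simp [Ev, hw]⟩
    exact hle h
  · intro h
    choose c hc using h
    have hB : B = ∑ w, c w • Ev w (A w) := by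
      funext u
      rw [Finset.sum_apply, Finset.sum_eq_single u]
      · simpa [Ev] using hc u
      · intro w _ hw; simp [Ev, (Ne.symm hw : ¬ u = w)]
      · simp
    rw [hB]
    exact Submodule.sum_mem _ fun w _ =>
      Submodule.smul_mem _ _ (Submodule.subset_span ⟨w, rfl⟩)

lemma isEulerian_iff {L : Submodule F (V → F × F)} {A : V → F × F} :
    IsEulerian L A ↔ CompleteVec A ∧
      ∀ B ∈ L, (∀ w, ∃ c : F, B w = c • A w) → B = 0 := by
  unfold IsEulerian
  rw [Submodule.eq_bot_iff]
  constructor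
  · rintro ⟨h1, h2⟩
    exact ⟨h1, fun B hBL hB => h2 B ⟨mem_hatSub_iff.mpr hB, hBL⟩⟩
  · rintro ⟨h1, h2⟩
    refine ⟨h1, fun B hB => ?_⟩
    exact h2 B hB.2 (mem_hatSub_iff.mp hB.1)

end Hat

section Minor
set_option linter.unusedSectionVars false
set_option maxHeartbeats 800000
variable {F : Type} [Field F] {V : Type} [Fintype V] [DecidableEq V]

lemma formK_smul_right (c : F) (a b : F × F) : formK a (c • b) = c * formK a b := by
  simp [formK]; ring

/-- restriction to coordinates different from `v` -/
noncomputable def resMap (v : V) : (V → F × F) →ₗ[F] ({w : V // w ≠ v} → F × F) :=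
  LinearMap.funLeft F (F × F) Subtype.val

@[simp] lemma resMap_apply (v : V) (A : V → F × F) (w : {w : V // w ≠ v}) :
    resMap v A w = A w.val := rfl

/-- the linear functional `A ↦ formK (A v) y` -/
noncomputable def phiMap (v : V) (y : F × F) : (V → F × F) →ₗ[F] F :=
  (bformKV : LinearMap.BilinForm F (V → F × F)).flip (Ev v y)

@[simp] lemma phiMap_apply (v : V) (y : F × F) (A : V → F × F) :
    phiMap v y A = formK (A v) y := by
  simp [phiMap, LinearMap.flip_apply, formKV_Ev]

/-- the minor of `L` at `v` in direction `y` -/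
noncomputable def minorSub (L : Submodule F (V → F × F)) (v : V) (y : F × F) :
    Submodule F ({w : V // w ≠ v} → F × F) :=
  Submodule.map (resMap v) (L ⊓ LinearMap.ker (phiMap v y))

lemma mem_minorSub {L : Submodule F (V → F × F)} {v : V} {y : F × F}
    {B' : {w : V // w ≠ v} → F × F} :
    B' ∈ minorSub L v y ↔
      ∃ B, (B ∈ L ∧ formK (B v) y = 0) ∧ resMap v B = B' := by
  simp [minorSub, Submodule.mem_map, Submodule.mem_inf, LinearMap.mem_ker]

lemma formKV_split (v : V) (A B : V → F × F) :
    formKV A B = formK (A v) (B v) +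
      formKV (resMap v A) (resMap v B) := by
  rw [formKV, formKV, ← Finset.add_sum_erase _ _ (Finset.mem_univ v)]
  congr 1
  exact Finset.sum_subtype _ (fun w => by simp [Finset.mem_erase]) _

lemma card_ne_subtype (v : V) :
    Fintype.card {w : V // w ≠ v} = Fintype.card V - 1 := by
  have h1 : Fintype.card {w : V // w = v} = 1 := Fintype.card_subtype_eq v
  have := Fintype.card_subtype_compl (fun w : V => w = v)
  rw [h1] at this
  exact this

lemma minorSub_form_eq_zero {L : Submodule F (V → F × F)} {v : V} {y : F × F}
    (hy : y ≠ 0) (hL : ∀ A ∈ L, ∀ B ∈ L, formKV A B = 0) :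
    ∀ A' ∈ minorSub L v y, ∀ B' ∈ minorSub L v y, formKV A' B' = 0 := by
  rintro _ hA' _ hB'
  obtain ⟨A, ⟨hAL, hAk⟩, rfl⟩ := mem_minorSub.mp hA'
  obtain ⟨B, ⟨hBL, hBk⟩, rfl⟩ := mem_minorSub.mp hB'
  obtain ⟨c, hc⟩ := (formK_eq_zero_iff hy).mp hAk
  obtain ⟨c', hc'⟩ := (formK_eq_zero_iff hy).mp hBk
  have hAB : formK (A v) (B v) = 0 := by
    rw [hc, hc', formK_smul_left, formK_smul_right, formK_self, mul_zero, mul_zero]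
  have := hL A hAL B hBL
  rw [formKV_split v A B, hAB, zero_add] at this
  exact this

lemma res_kills {L : Submodule F (V → F × F)} {v : V} {y : F × F}
    (hy : y ≠ 0) (hE : Ev v y ∉ L) {x : V → F × F} (hxL : x ∈ L)
    (hxk : formK (x v) y = 0) (hx : resMap v x = 0) : x = 0 := by
  obtain ⟨c, hc⟩ := (formK_eq_zero_iff hy).mp hxk
  have hxeq : x = c • Ev v y := by
    funext w
    by_cases hw : w = v
    · subst hw; simpa [Ev] using hc
    · have : resMap v x ⟨w, hw⟩ = 0 := by rw [hx]; rfl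
      simpa [Ev, hw] using this
  rcases eq_or_ne c 0 with rfl | hc0
  · rw [hxeq, zero_smul]
  · exfalso
    apply hE
    have : (c⁻¹ • x) ∈ L := L.smul_mem _ hxL
    rwa [hxeq, smul_smul, inv_mul_cancel₀ hc0, one_smul] at this

lemma minorSub_finrank {L : Submodule F (V → F × F)} {v : V} {y : F × F}
    (hy : y ≠ 0) (hE : Ev v y ∉ L) (hL : IsIsotropic L) :
    Module.finrank F (minorSub L v y) = Fintype.card {w : V // w ≠ v} := by
  classical
  have h1 : Module.finrank F L ≤
      Module.finrank F (L ⊓ LinearMap.ker (phiMap v y) : Submodule F (V → F × F)) + 1 := by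
    have hrn := LinearMap.finrank_range_add_finrank_ker ((phiMap v y).comp L.subtype)
    have hker : LinearMap.ker ((phiMap v y).comp L.subtype)
        = ((L ⊓ LinearMap.ker (phiMap v y)).comap L.subtype) := by
      rw [LinearMap.ker_comp]
      ext x
      simp [Submodule.mem_comap, x.2]
    have hb : Module.finrank F ((L ⊓ LinearMap.ker (phiMap v y)).comap L.subtype)
        = Module.finrank F
          (Submodule.map L.subtype ((L ⊓ LinearMap.ker (phiMap v y)).comap L.subtype)) :=
      (Submodule.equivMapOfInjective _ L.injective_subtype _).finrank_eq
    have hc : Submodule.map L.subtype ((L ⊓ LinearMap.ker (phiMap v y)).comap L.subtype)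
        = L ⊓ LinearMap.ker (phiMap v y) := by
      rw [Submodule.map_comap_subtype, inf_eq_right.mpr inf_le_left]
    rw [hker, hb, hc] at hrn
    have hrange : Module.finrank F (LinearMap.range ((phiMap v y).comp L.subtype)) ≤ 1 := by
      have := Submodule.finrank_le (LinearMap.range ((phiMap v y).comp L.subtype))
      simpa using this
    omega
  have hker2 : LinearMap.ker
      ((resMap v).comp (L ⊓ LinearMap.ker (phiMap v y)).subtype) = ⊥ := by
    rw [eq_bot_iff]
    intro x hx
    simp only [LinearMap.mem_ker, LinearMap.comp_apply] at hx
    obtain ⟨hxL, hxk⟩ := Submodule.mem_inf.mp x.2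
    rw [LinearMap.mem_ker, phiMap_apply] at hxk
    simp only [Submodule.mem_bot]
    exact Subtype.ext (res_kills hy hE hxL hxk hx)
  have h2 : Module.finrank F (minorSub L v y)
      = Module.finrank F (L ⊓ LinearMap.ker (phiMap v y) : Submodule F (V → F × F)) := by
    have hrn := LinearMap.finrank_range_add_finrank_ker
      ((resMap v).comp (L ⊓ LinearMap.ker (phiMap v y)).subtype)
    rw [hker2, finrank_bot, add_zero] at hrn
    have hrg : LinearMap.range ((resMap v).comp (L ⊓ LinearMap.ker (phiMap v y)).subtype)
        = minorSub L v y := by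
      rw [LinearMap.range_comp, Submodule.range_subtype]; rfl
    rw [hrg] at hrn
    exact hrn
  have h3 : Module.finrank F (minorSub L v y) ≤ Fintype.card {w : V // w ≠ v} :=
    isotropic_finrank_le _ (minorSub_form_eq_zero hy hL.2)
  have h4 : 1 ≤ Fintype.card V := Fintype.card_pos_iff.mpr ⟨v⟩
  have h5 := card_ne_subtype (V := V) v
  have h6 := hL.1
  omega

lemma minorSub_isIsotropic {L : Submodule F (V → F × F)} {v : V} {y : F × F}
    (hy : y ≠ 0) (hE : Ev v y ∉ L) (hL : IsIsotropic L) :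
    IsIsotropic (minorSub L v y) :=
  ⟨minorSub_finrank hy hE hL, minorSub_form_eq_zero hy hL.2⟩

end Minor

section Bij
set_option linter.unusedSectionVars false
variable {F : Type} [Field F] {V : Type} [Fintype V] [DecidableEq V]

/-- extend a vector on `V minus v` by `y` at `v` -/
def extVec (v : V) (y : F × F) (A' : {w : V // w ≠ v} → F × F) : V → F × F :=
  fun w => if h : w = v then y else A' ⟨w, h⟩

lemma euler_fiber_bij {L : Submodule F (V → F × F)} {v : V} {y : F × F}
    (hy : y ≠ 0) (hE : Ev v y ∉ L) :
    Set.BijOn (resMap v) {A | IsEulerian L A ∧ A v = y}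
      {A' | IsEulerian (minorSub L v y) A'} := by
  refine ⟨?_, ?_, ?_⟩
  · -- MapsTo
    rintro A ⟨hA, hAv⟩
    obtain ⟨hcomp, hkill⟩ := isEulerian_iff.mp hA
    rw [Set.mem_setOf_eq, isEulerian_iff]
    constructor
    · intro w
      exact hcomp w.val
    · intro B' hB' hcol
      obtain ⟨B, ⟨hBL, hBk⟩, rfl⟩ := mem_minorSub.mp hB'
      have hB0 : B = 0 := by
        apply hkill B hBL
        intro w
        by_cases hw : w = v
        · subst hw
          obtain ⟨c, hc⟩ := (formK_eq_zero_iff hy).mp hBk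
          exact ⟨c, by rw [hc, hAv]⟩
        · obtain ⟨c, hc⟩ := hcol ⟨w, hw⟩
          exact ⟨c, hc⟩
      rw [hB0, map_zero]
  · -- InjOn
    rintro A1 ⟨-, h1⟩ A2 ⟨-, h2⟩ heq
    funext w
    by_cases hw : w = v
    · subst hw; rw [h1, h2]
    · exact congrFun heq ⟨w, hw⟩
  · -- SurjOn
    rintro A' hA'
    obtain ⟨hcomp', hkill'⟩ := isEulerian_iff.mp hA'
    have hres : resMap v (extVec v y A') = A' := by
      funext w
      simp only [resMap_apply, extVec, dif_neg w.2]
    refine ⟨extVec v y A', ⟨?_, by simp [extVec]⟩, hres⟩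
    rw [isEulerian_iff]
    constructor
    · intro w
      by_cases hw : w = v
      · subst hw; simpa [extVec] using hy
      · simpa [extVec, hw] using hcomp' ⟨w, hw⟩
    · intro B hBL hcol
      obtain ⟨c, hc⟩ := hcol v
      have hcv : B v = c • y := by rw [hc]; simp [extVec]
      have hBk : formK (B v) y = 0 := by
        rw [hcv, formK_smul_left, formK_self, mul_zero]
      have hres0 : resMap v B = 0 := by
        apply hkill' (resMap v B) (mem_minorSub.mpr ⟨B, ⟨hBL, hBk⟩, rfl⟩)
        intro w
        obtain ⟨c', hc'⟩ := hcol w.val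
        refine ⟨c', ?_⟩
        rw [resMap_apply, hc']
        congr 1
        simp [extVec, w.2]
      exact res_kills hy hE hBL hBk hres0

end Bij

section Count
set_option linter.unusedSectionVars false
set_option maxHeartbeats 1000000

lemma formKV_Ev_Ev {F : Type} [Field F] {V : Type} [Fintype V] [DecidableEq V]
    (v : V) (x y : F × F) : formKV (Ev v x) (Ev v y) = formK x y := by
  rw [formKV_Ev]
  simp [Ev]

lemma euler_lower {F : Type} [Field F] [Fintype F] :
    ∀ n : ℕ, ∀ (V : Type) (_ : Fintype V) (_ : DecidableEq V)
      (L : Submodule F (V → F × F)), Fintype.card V = n → IsIsotropic L →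
      (Fintype.card F ^ 2 - Fintype.card F) ^ (n - 1) ≤ eulerCount L := by
  intro n
  induction n with
  | zero =>
    intro V iV dV L hcard hL
    haveI : IsEmpty V := Fintype.card_eq_zero_iff.mp hcard
    have hall : {A : V → F × F | IsEulerian L A} = Set.univ := by
      ext A
      simp only [Set.mem_setOf_eq, Set.mem_univ, iff_true]
      refine ⟨fun w => isEmptyElim w, ?_⟩
      rw [eq_bot_iff]
      intro x hx
      have hss : Subsingleton (V → F × F) := ⟨fun a b => funext fun w => isEmptyElim w⟩
      simp [Subsingleton.elim x 0]
    rw [eulerCount, hall, Set.ncard_univ]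
    haveI : Unique (V → F × F) := ⟨⟨fun w => isEmptyElim w⟩, fun a => funext fun w => isEmptyElim w⟩
    simp [Nat.card_unique]
  | succ n ih =>
    intro V iV dV L hcard hL
    classical
    have hne : Nonempty V := Fintype.card_pos_iff.mp (by omega)
    obtain ⟨v⟩ := hne
    obtain ⟨q, hq⟩ : ∃ q, Fintype.card F = q := ⟨_, rfl⟩
    rw [hq]
    have hq2 : 2 ≤ q := hq ▸ Fintype.one_lt_card
    -- the Eulerian finset
    have hfin : {A : V → F × F | IsEulerian L A}.Finite := Set.toFinite _
    set T : Finset (V → F × F) := hfin.toFinset with hT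
    have hcount : eulerCount L = T.card := by
      rw [eulerCount, Set.ncard_eq_toFinset_card _ hfin]
    -- fiberwise decomposition over the value at v
    have hfib : T.card = ∑ y : F × F, (T.filter fun A => A v = y).card :=
      Finset.card_eq_sum_card_fiberwise (fun A _ => Finset.mem_univ (A v))
    -- good and bad directions
    set Bd : Finset (F × F) := Finset.univ.filter (fun y => y = 0 ∨ Ev v y ∈ L) with hBd
    set Gd : Finset (F × F) := Finset.univ.filter (fun y => ¬(y = 0 ∨ Ev v y ∈ L)) with hGd
    have hsplit : Bd.card + Gd.card = q * q := by
      rw [hBd, hGd, Finset.card_filter_add_card_filter_not]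
      simp [Fintype.card_prod, hq]
    have hBdcard : Bd.card ≤ q := by
      by_cases hex : ∃ y₀ : F × F, y₀ ≠ 0 ∧ Ev v y₀ ∈ L
      · obtain ⟨y₀, hy₀, hy₀L⟩ := hex
        have hsub : Bd ⊆ Finset.image (fun c : F => c • y₀) Finset.univ := by
          intro y hy
          rw [hBd, Finset.mem_filter] at hy
          rcases hy.2 with rfl | hyL
          · exact Finset.mem_image.mpr ⟨0, Finset.mem_univ _, (zero_smul F y₀)⟩
          · have hform : formK y y₀ = 0 := by
              rw [← formKV_Ev_Ev v]
              exact hL.2 _ hyL _ hy₀L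
            obtain ⟨c, hc⟩ := (formK_eq_zero_iff hy₀).mp hform
            exact Finset.mem_image.mpr ⟨c, Finset.mem_univ _, hc.symm⟩
        calc Bd.card
            ≤ (Finset.image (fun c : F => c • y₀) Finset.univ).card :=
              Finset.card_le_card hsub
          _ ≤ (Finset.univ : Finset F).card := Finset.card_image_le
          _ = q := by rw [Finset.card_univ, hq]
      · push_neg at hex
        have hsub : Bd ⊆ {0} := by
          intro y hy
          rw [hBd, Finset.mem_filter] at hy
          rcases hy.2 with rfl | hyL
          · exact Finset.mem_singleton_self 0
          · rcases eq_or_ne y 0 with rfl | hy0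
            · exact Finset.mem_singleton_self 0
            · exact absurd hyL (hex y hy0)
        calc Bd.card ≤ ({0} : Finset (F × F)).card := Finset.card_le_card hsub
          _ = 1 := Finset.card_singleton 0
          _ ≤ q := by clear hfib hcount; omega
    have hGdcard : q * q - q ≤ Gd.card := by clear hfib hcount; omega
    -- each good fiber is at least the IH bound
    have hfiber : ∀ y ∈ Gd, (q ^ 2 - q) ^ (n - 1) ≤ (T.filter fun A => A v = y).card := by
      intro y hy
      rw [hGd, Finset.mem_filter] at hy
      push_neg at hy
      obtain ⟨-, hy0, hyE⟩ := hy
      have hset : ((T.filter fun A => A v = y) : Set (V → F × F))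
          = {A | IsEulerian L A ∧ A v = y} := by
        ext A
        simp [hT, Set.Finite.mem_toFinset]
      have hcard1 : (T.filter fun A => A v = y).card
          = Set.ncard {A : V → F × F | IsEulerian L A ∧ A v = y} := by
        rw [← hset, Set.ncard_coe_finset]
      have hbij := euler_fiber_bij (L := L) hy0 hyE
      have hcard2 : Set.ncard {A : V → F × F | IsEulerian L A ∧ A v = y}
          = eulerCount (minorSub L v y) := by
        rw [eulerCount, ← hbij.image_eq, Set.ncard_image_of_injOn hbij.injOn]
      have hcardV' : Fintype.card {w : V // w ≠ v} = n := by
        rw [card_ne_subtype, hcard]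
        exact Nat.add_sub_cancel _ _
      have := ih {w : V // w ≠ v} inferInstance inferInstance
        (minorSub L v y) hcardV' (minorSub_isIsotropic hy0 hyE hL)
      rw [hq] at this
      rw [hcard1, hcard2]
      exact this
    -- assemble
    have hsum : ∑ y ∈ Gd, (T.filter fun A => A v = y).card ≤ T.card := by
      rw [hfib]
      exact Finset.sum_le_sum_of_subset (Finset.subset_univ Gd)
    have hlow : Gd.card * (q ^ 2 - q) ^ (n - 1)
        ≤ ∑ y ∈ Gd, (T.filter fun A => A v = y).card := by
      simpa [smul_eq_mul] using Finset.card_nsmul_le_sum Gd _ _ hfiber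
    have hpow : (q ^ 2 - q) ^ (n + 1 - 1) ≤ (q * q - q) * (q ^ 2 - q) ^ (n - 1) := by
      have hqq : q ^ 2 = q * q := sq q
      rcases n with _ | m
      · simp only [Nat.add_sub_cancel, pow_one, Nat.zero_sub, pow_zero, mul_one, hqq]
        have h2q : q * 2 ≤ q * q := Nat.mul_le_mul_left q hq2
        have h1q : (1 : ℕ) ≤ q := le_trans one_le_two hq2
        have h3 : 1 + q ≤ q * 2 := by rw [mul_two]; exact Nat.add_le_add_right h1q q
        exact Nat.le_sub_of_add_le (le_trans h3 h2q)
      · rw [Nat.add_sub_cancel, Nat.succ_sub_one, ← hqq, ← pow_succ']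
    calc (q ^ 2 - q) ^ (n + 1 - 1)
        ≤ (q * q - q) * (q ^ 2 - q) ^ (n - 1) := hpow
      _ ≤ Gd.card * (q ^ 2 - q) ^ (n - 1) :=
          Nat.mul_le_mul_right _ hGdcard
      _ ≤ ∑ y ∈ Gd, (T.filter fun A => A v = y).card := hlow
      _ ≤ T.card := hsum
      _ = eulerCount L := hcount.symm

lemma euler_upper {F : Type} [Field F] [Fintype F] {V : Type} [Fintype V] [DecidableEq V]
    (L : Submodule F (V → F × F)) :
    eulerCount L ≤ (Fintype.card F ^ 2 - 1) ^ Fintype.card V := by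
  classical
  rw [eulerCount, ← Nat.card_coe_set_eq]
  have hinj : Function.Injective
      (fun (A : {A : V → F × F // IsEulerian L A}) (w : V) =>
        (⟨A.1 w, A.2.1 w⟩ : {x : F × F // x ≠ 0})) := by
    intro A1 A2 h
    apply Subtype.ext
    funext w
    exact congrArg Subtype.val (congrFun h w)
  calc Nat.card {A : V → F × F // IsEulerian L A}
      ≤ Nat.card (V → {x : F × F // x ≠ 0}) := Nat.card_le_card_of_injective _ hinj
    _ = (Fintype.card F ^ 2 - 1) ^ Fintype.card V := by
        rw [Nat.card_eq_fintype_card, Fintype.card_fun]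
        congr 1
        rw [Fintype.card_subtype_compl, Fintype.card_subtype_eq, Fintype.card_prod, sq]

end Count


/-- `(q² − q)^{n−1} ≤ ε(L) ≤ (q² − 1)^n`. -/
theorem eulerCount_bounds (hchar : ringChar F ≠ 2)
    (L : Submodule F (V → F × F)) (hL : IsIsotropic L) :
    (Fintype.card F ^ 2 - Fintype.card F) ^ (Fintype.card V - 1) ≤ eulerCount L ∧
    eulerCount L ≤ (Fintype.card F ^ 2 - 1) ^ Fintype.card V := by
  constructor
  · exact euler_lower (Fintype.card V) V inferInstance inferInstance L rfl hL
  · exact euler_upper L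
end

section
/- Let G be a connected labeled graph on V over F_q with |V| = n. Then l(G), the number of labeled graphs locally equivalent to G, satisfies l(G) ≤ (q − 1)·(q² − 1)^n; in particular l(G) ≤ q^{2n+1}. -/
open Matrix

section Aux
set_option linter.unusedSectionVars false

variable {F : Type} [Field F] {V : Type} [Fintype V] [DecidableEq V]

lemma presRow_apply (G : Matrix V V F) (A B : V → F × F) (v w : V) :
    presRow G A B v w = ((if v = w then (1:F) else 0) * (B w).1 + G v w * (A w).1,
                         (if v = w then (1:F) else 0) * (B w).2 + G v w * (A w).2) := by
  unfold presRow Dmat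
  rw [fromCols_mul_fromBlocks]
  simp [Matrix.mul_diagonal, Matrix.one_apply, diagonal_apply]
  constructor <;> { split <;> simp_all }

lemma A_ne_zero {A B : V → F × F} {c : F} (hc : ∀ v, detD A B v = c) (hc0 : c ≠ 0)
    (v : V) : A v ≠ 0 := by
  intro h
  apply hc0
  rw [← hc v]
  simp [detD, h]

lemma extract {G : Matrix V V F} {A B : V → F × F} {c : F}
    (hc : ∀ v, detD A B v = c) (lam : V → F) (w : V) :
    formK ((∑ u, lam u • presRow G A B u) w) (A w) = c * lam w := by
  have h1 : (∑ u, lam u • presRow G A B u) w = ∑ u, lam u • presRow G A B u w := by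
    simp
  rw [h1]
  have h2 : ∀ u, lam u • presRow G A B u w =
      (if u = w then lam u • B w else 0) + (lam u * G u w) • A w := by
    intro u
    rw [presRow_apply]
    by_cases h : u = w <;>
        simp [h, Prod.ext_iff, Prod.smul_fst, Prod.smul_snd, smul_eq_mul] <;>
      first
      | rfl
      | (constructor <;> ring)
      | ring
  simp only [h2, Finset.sum_add_distrib, Finset.sum_ite_eq', Finset.mem_univ, if_true]
  have h3 : ∀ (x y : F × F) (t : F), formK (x + t • y) (A w) =
      formK x (A w) + t * formK y (A w) := by
    intro x y t; simp only [formK, Prod.fst_add, Prod.snd_add, Prod.smul_fst, Prod.smul_snd, smul_eq_mul]; ring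
  rw [show (∑ u, (lam u * G u w) • A w) = (∑ u, lam u * G u w) • A w by
    rw [Finset.sum_smul]]
  rw [h3]
  have : formK (A w) (A w) = 0 := by simp only [formK]; ring
  rw [this]
  have : formK (lam w • B w) (A w) = lam w * detD A B w := by
    simp only [formK, detD, Prod.smul_fst, Prod.smul_snd, smul_eq_mul]; ring
  rw [this, hc w]
  ring

lemma indep_of_detD {G : Matrix V V F} {A B : V → F × F} {c : F}
    (hc : ∀ v, detD A B v = c) (hc0 : c ≠ 0) :
    LinearIndependent F (presRow G A B) := by
  rw [Fintype.linearIndependent_iff]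
  intro g hg w
  have := extract (G := G) hc g w
  rw [hg] at this
  simp [formK] at this
  rcases this with h | h
  · exact absurd h hc0
  · exact h

/-- Uniqueness: a labeled graph presenting `L` with a given `A` and constant `c` is unique. -/
lemma pres_unique_s18 {L : Submodule F (V → F × F)} {G G' : Matrix V V F}
    {A B B' : V → F × F} {c : F} (hc0 : c ≠ 0)
    (hc : ∀ v, detD A B v = c) (hc' : ∀ v, detD A B' v = c)
    (hG : ∀ v, G v v = 0) (hG' : ∀ v, G' v v = 0)
    (hL : Submodule.span F (Set.range (presRow G A B)) = L)
    (hL' : Submodule.span F (Set.range (presRow G' A B')) = L) :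
    G = G' := by
  ext v w
  have hmem : presRow G' A B' v ∈ Submodule.span F (Set.range (presRow G A B)) := by
    rw [hL, ← hL']
    exact Submodule.subset_span (Set.mem_range_self v)
  rw [Submodule.mem_span_range_iff_exists_fun] at hmem
  obtain ⟨lam, hlam⟩ := hmem
  have key : ∀ w', lam w' = if v = w' then 1 else 0 := by
    intro w'
    have h1 := extract (G := G) hc lam w'
    rw [hlam] at h1
    have h2 : formK (presRow G' A B' v w') (A w') = if v = w' then c else 0 := by
      rw [presRow_apply]
      have hd := hc' w'
      simp only [detD] at hd
      by_cases h : v = w'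
      · subst h
        simp only [eq_self_iff_true, if_true, formK, one_mul]
        linear_combination hd
      · simp only [if_neg h, formK, zero_mul, zero_add]
        ring
    rw [h2] at h1
    apply mul_left_cancel₀ hc0
    rw [← h1]
    split <;> ring
  have heq : presRow G A B v = presRow G' A B' v := by
    rw [← hlam]
    have : ∀ u, lam u • presRow G A B u =
        if u = v then presRow G A B v else 0 := by
      intro u
      rw [key u]
      by_cases h : u = v
      · subst h; simp
      · simp [h, Ne.symm h]
    simp only [this, Finset.sum_ite_eq', Finset.mem_univ, if_true]
  have hw := congrFun heq w
  rw [presRow_apply, presRow_apply, Prod.ext_iff] at hw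
  by_cases h : v = w
  · subst h; rw [hG, hG']
  · simp only [if_neg h, zero_mul, zero_add] at hw
    by_contra hne
    have hA := A_ne_zero hc hc0 w
    have hd : G v w - G' v w ≠ 0 := sub_ne_zero.mpr hne
    have e1 : (G v w - G' v w) * (A w).1 = 0 := by linear_combination hw.1
    have e2 : (G v w - G' v w) * (A w).2 = 0 := by linear_combination hw.2
    exact hA (Prod.ext (by rcases mul_eq_zero.mp e1 with h'|h' <;> tauto)
      (by rcases mul_eq_zero.mp e2 with h'|h' <;> tauto))

end Aux
section Aux2
set_option linter.unusedSectionVars false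
variable {F : Type} [Field F] {V : Type} [Fintype V] [DecidableEq V]

lemma isLGraph_star {G : Matrix V V F} (hG : IsLGraph G) (r : F) (v : V) :
    IsLGraph (starOp G r v) := by
  obtain ⟨hsym, hdiag⟩ := hG
  constructor
  · apply Matrix.IsSymm.ext
    intro i j
    simp only [starOp, Matrix.of_apply]
    have hs : ∀ a b : V, G a b = G b a := fun a b => (hsym.apply b a)
    by_cases hiv : i = v <;> by_cases hjv : j = v <;> by_cases hij : i = j <;>
        simp [hiv, hjv, hij, eq_comm] <;>
      first
      | rfl
      | linear_combination hs i j
      | linear_combination hs v j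
      | linear_combination hs v i
      | ring
  · intro u
    simp [starOp, hdiag u]

lemma isLGraph_circ {G : Matrix V V F} (hG : IsLGraph G) (s : F) (v : V) :
    IsLGraph (circOp G s v) := by
  obtain ⟨hsym, hdiag⟩ := hG
  constructor
  · apply Matrix.IsSymm.ext
    intro i j
    simp only [circOp, Matrix.of_apply]
    have h1 := hsym.apply i j
    by_cases hiv : i = v <;> by_cases hjv : j = v <;> simp [hiv, hjv, h1] <;>
      first
      | rfl
      | exact Or.inl (hsym.apply v j)
      | exact Or.inl (hsym.apply v i)
      | exact Or.inl ((hsym.apply v j).symm)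
      | exact Or.inl ((hsym.apply v i).symm)
  · intro u
    simp [circOp, hdiag u]

lemma presRow_star {G : Matrix V V F} (hG : IsLGraph G) (A B : V → F × F) (r : F) (v : V)
    (u : V) :
    presRow (starOp G r v) (fun w => if w = v then A w + r • B w else A w)
      (fun w => B w + (r * (G v w)^2) • A w) u
      = presRow G A B u + (r * G u v) • presRow G A B v := by
  obtain ⟨hsym, hdiag⟩ := hG
  funext w
  have h1 := hsym.apply v u
  have h2 := hsym.apply v w
  have hvv := hdiag v
  have hww := hdiag w
  simp only [presRow_apply, starOp, Matrix.of_apply, Pi.add_apply, Pi.smul_apply,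
    Prod.ext_iff, Prod.fst_add, Prod.snd_add, Prod.smul_fst, Prod.smul_snd, smul_eq_mul]
  by_cases hwv : w = v
  · subst hwv
    by_cases huw : u = w
    · subst huw
      simp [hvv]
    · simp [huw, hvv]
      constructor <;> ring
  · by_cases huv : u = v
    · subst huv
      simp [hwv, Ne.symm hwv, hvv]
      all_goals first | (constructor <;> ring) | ring | rfl
    · by_cases huw : u = w
      · subst huw
        simp [hwv, Ne.symm hwv, hww, huv]
        rw [h2]
        all_goals first | (constructor <;> ring) | ring | rfl
      · simp [hwv, Ne.symm hwv, huv, huw]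
        rw [h1]
        all_goals first | (constructor <;> ring) | ring | rfl

lemma presRow_circ {G : Matrix V V F} (hG : IsLGraph G) (A B : V → F × F) {s : F}
    (hs : s ≠ 0) (v : V) (u : V) :
    presRow (circOp G s v) (fun w => if w = v then s⁻¹ • A w else A w)
      (fun w => if w = v then s • B w else B w) u
      = (if u = v then s else 1) • presRow G A B u := by
  funext w
  have hinv : s * s⁻¹ = 1 := mul_inv_cancel₀ hs
  have hvv := hG.2 v
  simp only [presRow_apply, circOp, Matrix.of_apply, Pi.smul_apply, Prod.ext_iff,
    Prod.smul_fst, Prod.smul_snd, smul_eq_mul]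
  by_cases hwv : w = v
  · by_cases huv : u = v
    · simp [hwv, huv, hvv, -mul_eq_mul_left_iff, -mul_eq_mul_right_iff]
      all_goals constructor <;> ring
    · have huw : ¬u = w := fun h => huv (h.trans hwv)
      simp [hwv, huv, huw, -mul_eq_mul_left_iff, -mul_eq_mul_right_iff]
      constructor
      · linear_combination G u v * (A v).1 * hinv
      · linear_combination G u v * (A v).2 * hinv
  · by_cases huv : u = v
    · have huw : ¬u = w := fun h => hwv (h.symm.trans huv)
      simp [hwv, Ne.symm hwv, huv, huw, -mul_eq_mul_left_iff, -mul_eq_mul_right_iff]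
      all_goals constructor <;> ring
    · by_cases huw : u = w <;>
        simp [hwv, Ne.symm hwv, huv, huw, -mul_eq_mul_left_iff, -mul_eq_mul_right_iff] <;>
      all_goals first | (constructor <;> ring) | ring | rfl | trivial

lemma detD_star {G : Matrix V V F} (hG : IsLGraph G) (A B : V → F × F) (r : F) (v w : V) :
    detD (fun w => if w = v then A w + r • B w else A w)
      (fun w => B w + (r * (G v w)^2) • A w) w = detD A B w := by
  have hvv := hG.2 v
  by_cases hwv : w = v <;>
    simp only [detD, hwv, if_pos, if_neg, if_true, if_false, Prod.fst_add, Prod.snd_add,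
      Prod.smul_fst, Prod.smul_snd, smul_eq_mul, ite_true, ite_false]
  · subst hwv; rw [hvv]; ring
  · ring

lemma detD_circ (A B : V → F × F) {s : F} (hs : s ≠ 0) (v w : V) :
    detD (fun w => if w = v then s⁻¹ • A w else A w)
      (fun w => if w = v then s • B w else B w) w = detD A B w := by
  have hinv : s * s⁻¹ = 1 := mul_inv_cancel₀ hs
  by_cases hwv : w = v <;>
    simp only [detD, hwv, Prod.smul_fst, Prod.smul_snd, smul_eq_mul, ite_true, ite_false]
  field_simp

end Aux2
section Aux3
set_option linter.unusedSectionVars false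
variable {F : Type} [Field F] {V : Type} [Fintype V] [DecidableEq V]

lemma span_shear {M : Type} [AddCommGroup M] [Module F M] (f : V → M) (t : V → F) (v : V)
    (htv : t v = 0) :
    Submodule.span F (Set.range fun u => f u + t u • f v) = Submodule.span F (Set.range f) := by
  apply le_antisymm <;> rw [Submodule.span_le] <;> rintro x ⟨u, rfl⟩
  · exact Submodule.add_mem _ (Submodule.subset_span ⟨u, rfl⟩)
      (Submodule.smul_mem _ _ (Submodule.subset_span ⟨v, rfl⟩))
  · have h1 : f v ∈ Submodule.span F (Set.range fun u => f u + t u • f v) :=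
      Submodule.subset_span ⟨v, by simp [htv]⟩
    have h2 : f u = (f u + t u • f v) - t u • f v := by abel
    rw [h2]
    exact Submodule.sub_mem _ (Submodule.subset_span ⟨u, rfl⟩)
      (Submodule.smul_mem _ _ h1)

lemma span_scale {M : Type} [AddCommGroup M] [Module F M] (f : V → M) (g : V → F)
    (hg : ∀ u, g u ≠ 0) :
    Submodule.span F (Set.range fun u => g u • f u) = Submodule.span F (Set.range f) := by
  apply le_antisymm <;> rw [Submodule.span_le] <;> rintro x ⟨u, rfl⟩
  · exact Submodule.smul_mem _ _ (Submodule.subset_span ⟨u, rfl⟩)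
  · have : f u = (g u)⁻¹ • (g u • f u) := by
      rw [smul_smul, inv_mul_cancel₀ (hg u), one_smul]
    rw [this]
    exact Submodule.smul_mem _ _ (Submodule.subset_span ⟨u, rfl⟩)

lemma step_pres {L : Submodule F (V → F × F)} {G H : Matrix V V F} {A B : V → F × F}
    (h : IsGraphicPresentation L G A B) (hstep : LocalStep G H) :
    ∃ A' B', IsGraphicPresentation L H A' B' := by
  obtain ⟨hG, ⟨c, hc0, hc⟩, hind, hspan⟩ := h
  rcases hstep with ⟨v, r, rfl⟩ | ⟨v, s, hs, rfl⟩
  · have hdet : ∀ w, detD (fun w => if w = v then A w + r • B w else A w)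
        (fun w => B w + (r * (G v w)^2) • A w) w = c := fun w => by
      rw [detD_star hG A B r v w]; exact hc w
    refine ⟨_, _, isLGraph_star hG r v, ⟨c, hc0, hdet⟩, indep_of_detD hdet hc0, ?_⟩
    have hrel : presRow (starOp G r v) (fun w => if w = v then A w + r • B w else A w)
        (fun w => B w + (r * (G v w)^2) • A w)
        = fun u => presRow G A B u + (r * G u v) • presRow G A B v :=
      funext fun u => presRow_star hG A B r v u
    rw [hrel, span_shear (presRow G A B) (fun u => r * G u v) v (by simp [hG.2 v])]
    exact hspan
  · have hdet : ∀ w, detD (fun w => if w = v then s⁻¹ • A w else A w)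
        (fun w => if w = v then s • B w else B w) w = c := fun w => by
      rw [detD_circ A B hs v w]; exact hc w
    refine ⟨_, _, isLGraph_circ hG s v, ⟨c, hc0, hdet⟩, indep_of_detD hdet hc0, ?_⟩
    have hrel : presRow (circOp G s v) (fun w => if w = v then s⁻¹ • A w else A w)
        (fun w => if w = v then s • B w else B w)
        = fun u => (if u = v then s else 1) • presRow G A B u :=
      funext fun u => presRow_circ hG A B hs v u
    rw [hrel, span_scale (presRow G A B) (fun u => if u = v then s else 1)
      (fun u => by split <;> simp [hs])]
    exact hspan

lemma locEquiv_pres {L : Submodule F (V → F × F)} {G H : Matrix V V F}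
    (h : LocallyEquivalent G H) :
    ∀ A B, IsGraphicPresentation L G A B → ∃ A' B', IsGraphicPresentation L H A' B' := by
  induction h with
  | refl => exact fun A B h => ⟨A, B, h⟩
  | tail _ hstep ih =>
      intro A B h0
      obtain ⟨A1, B1, h1⟩ := ih A B h0
      exact step_pres h1 hstep

end Aux3


variable {F : Type} [Field F] [Fintype F] {V : Type} [Fintype V] [DecidableEq V] [Nonempty V]


/-- For a connected labeled graph `G` on `n` vertices,
`l(G) ≤ (q − 1)·(q² − 1)^n ≤ q^{2n+1}`. -/
theorem locCount_upper_bound (hchar : ringChar F ≠ 2)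
    (G : Matrix V V F) (hG : IsLGraph G) (hconn : GraphConnected G) :
    locCount G ≤ (Fintype.card F - 1) * (Fintype.card F ^ 2 - 1) ^ Fintype.card V ∧
    locCount G ≤ Fintype.card F ^ (2 * Fintype.card V + 1) := by
  classical
  obtain ⟨v0⟩ := (inferInstance : Nonempty V)
  have hdet0 : ∀ v : V, detD (fun _ : V => ((0:F),(1:F))) (fun _ : V => ((1:F),(0:F))) v = 1 :=
    fun v => by simp [detD]
  have hpres0 : IsGraphicPresentation
      (Submodule.span F (Set.range (presRow G (fun _ => ((0:F),(1:F))) (fun _ => ((1:F),(0:F))))))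
      G (fun _ => ((0:F),(1:F))) (fun _ => ((1:F),(0:F))) :=
    ⟨hG, ⟨1, one_ne_zero, hdet0⟩, indep_of_detD hdet0 one_ne_zero, rfl⟩
  set L := Submodule.span F
    (Set.range (presRow G (fun _ : V => ((0:F),(1:F))) (fun _ : V => ((1:F),(0:F))))) with hLdef
  have hSmem : ∀ H : {H : Matrix V V F // LocallyEquivalent G H},
      ∃ A B, IsGraphicPresentation L H.1 A B := fun H =>
    locEquiv_pres H.2 _ _ hpres0
  choose Af Bf hf using hSmem
  have hcprop : ∀ H, (∀ v, detD (Af H) (Bf H) v = detD (Af H) (Bf H) v0) ∧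
      detD (Af H) (Bf H) v0 ≠ 0 := by
    intro H
    obtain ⟨c, hc0, hcc⟩ := (hf H).2.1
    exact ⟨fun v => by rw [hcc v, hcc v0], by rw [hcc v0]; exact hc0⟩
  have key : Nat.card {H : Matrix V V F // LocallyEquivalent G H} ≤
      Fintype.card ((V → {x : F × F // x ≠ 0}) × {c : F // c ≠ 0}) := by
    rw [← Nat.card_eq_fintype_card]
    apply Nat.card_le_card_of_injective
      (f := fun H => (fun v => (⟨Af H v, A_ne_zero (hcprop H).1 (hcprop H).2 v⟩ :
          {x : F × F // x ≠ 0}),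
        (⟨detD (Af H) (Bf H) v0, (hcprop H).2⟩ : {c : F // c ≠ 0})))
    intro H1 H2 heq
    have hA : Af H1 = Af H2 :=
      funext fun v => congrArg Subtype.val (congrFun (congrArg Prod.fst heq) v)
    have hc : detD (Af H1) (Bf H1) v0 = detD (Af H2) (Bf H2) v0 :=
      congrArg Subtype.val (congrArg Prod.snd heq)
    have hprop2 := (hcprop H2).1
    rw [← hA] at hc hprop2
    have hc' : ∀ v, detD (Af H1) (Bf H2) v = detD (Af H1) (Bf H1) v0 :=
      fun v => (hprop2 v).trans hc.symm
    have hspan2 := (hf H2).2.2.2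
    rw [← hA] at hspan2
    exact Subtype.ext (pres_unique_s18 (hcprop H1).2 (hcprop H1).1 hc'
      (hf H1).1.2 (hf H2).1.2 (hf H1).2.2.2 hspan2)
  have hcard1 : Fintype.card {x : F × F // x ≠ 0} = Fintype.card F ^ 2 - 1 := by
    have h := Fintype.card_subtype_compl (fun x : F × F => x = 0)
    simp only [Fintype.card_subtype_eq] at h
    calc Fintype.card {x : F × F // x ≠ 0}
        = Fintype.card (F × F) - 1 := h
      _ = Fintype.card F ^ 2 - 1 := by rw [Fintype.card_prod, sq]
  have hcard2 : Fintype.card {c : F // c ≠ 0} = Fintype.card F - 1 := by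
    have h := Fintype.card_subtype_compl (fun c : F => c = 0)
    simp only [Fintype.card_subtype_eq] at h
    exact h
  have hcardT : Fintype.card ((V → {x : F × F // x ≠ 0}) × {c : F // c ≠ 0})
      = (Fintype.card F ^ 2 - 1) ^ Fintype.card V * (Fintype.card F - 1) := by
    rw [Fintype.card_prod, Fintype.card_fun, hcard1, hcard2]
  have hloc : locCount G = Nat.card {H : Matrix V V F // LocallyEquivalent G H} := by
    rw [locCount, ← Nat.card_coe_set_eq]
    rfl
  have main : locCount G ≤
      (Fintype.card F - 1) * (Fintype.card F ^ 2 - 1) ^ Fintype.card V := by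
    rw [hloc, mul_comm]
    calc Nat.card {H : Matrix V V F // LocallyEquivalent G H}
        ≤ Fintype.card ((V → {x : F × F // x ≠ 0}) × {c : F // c ≠ 0}) := key
      _ = (Fintype.card F ^ 2 - 1) ^ Fintype.card V * (Fintype.card F - 1) := hcardT
  refine ⟨main, le_trans main ?_⟩
  have h1 : Fintype.card F - 1 ≤ Fintype.card F := Nat.sub_le _ _
  have h2 : (Fintype.card F ^ 2 - 1) ^ Fintype.card V ≤
      (Fintype.card F ^ 2) ^ Fintype.card V :=
    Nat.pow_le_pow_left (Nat.sub_le _ _) _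
  calc (Fintype.card F - 1) * (Fintype.card F ^ 2 - 1) ^ Fintype.card V
      ≤ Fintype.card F * (Fintype.card F ^ 2) ^ Fintype.card V := Nat.mul_le_mul h1 h2
    _ = Fintype.card F ^ (2 * Fintype.card V + 1) := by
        rw [← pow_mul, pow_succ']
end
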